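/- Let q be a bound state. Then for all ψ₁, ψ₂ ∈ ker L_q and all ψ₃ ∈ Z_q, one has the cancellation ∫_{ℝ^N} f''(q) ψ₁ ψ₂ ψ₃ dx = 0. -/

import Mathlib

open MeasureTheory Filter Topology Set

noncomputable section

/-- Euclidean space `ℝ^N`. -/
abbrev Spc (N : ℕ) : Type := EuclideanSpace ℝ (Fin N)

namespace DKG

variable {N : ℕ}

/-- The focusing nonlinearity `f(s) = |s|^(p-1) s`. -/
def nl (p s : ℝ) : ℝ := |s| ^ (p - 1) * s

/-- Its derivative `f'(s) = p |s|^(p-1)`. -/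
def nl' (p s : ℝ) : ℝ := p * |s| ^ (p - 1)

/-- Its second derivative `f''(s) = p (p-1) |s|^(p-3) s`. -/
def nl'' (p s : ℝ) : ℝ := p * (p - 1) * |s| ^ (p - 3) * s

/-- The potential `F(s) = |s|^(p+1)/(p+1)`. -/
def Fnl (p s : ℝ) : ℝ := |s| ^ (p + 1) / (p + 1)

/-- Energy-subcritical exponent: `2 < p < p*(N)`, with `p*(N) = ∞` for `N = 2` and
`(N+2)/(N-2)` for `N ≥ 3`. -/
def Subcritical (N : ℕ) (p : ℝ) : Prop :=
  2 < p ∧ (3 ≤ N → p < ((N : ℝ) + 2) / ((N : ℝ) - 2))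

/-- `p̄ = min(3, p)`. -/
def pbar (p : ℝ) : ℝ := min 3 p

/-- Partial derivative in the `i`-th coordinate direction. -/
def pd (i : Fin N) (g : Spc N → ℝ) (x : Spc N) : ℝ :=
  fderiv ℝ g x (EuclideanSpace.single i (1 : ℝ))

/-- The Laplacian. -/
def lap (g : Spc N → ℝ) (x : Spc N) : ℝ := ∑ i : Fin N, pd i (pd i g) x

/-- The angular derivative `Ω_{ij} g = x_i ∂_j g - x_j ∂_i g`. -/
def angD (i j : Fin N) (g : Spc N → ℝ) (x : Spc N) : ℝ :=
  x i * pd j g x - x j * pd i g x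

/-- `L²` scalar product. -/
def L2inner (g h : Spc N → ℝ) : ℝ := ∫ x, g x * h x

/-- `L²` norm. -/
def L2norm (g : Spc N → ℝ) : ℝ := Real.sqrt (∫ x, (g x) ^ 2)

/-- `H¹` norm. -/
def H1norm (g : Spc N → ℝ) : ℝ :=
  Real.sqrt (∫ x, (‖fderiv ℝ g x‖ ^ 2 + (g x) ^ 2))

/-- Norm of the product space `ℋ = H¹ × L²`. -/
def HcalNorm (g h : Spc N → ℝ) : ℝ := Real.sqrt ((H1norm g) ^ 2 + (L2norm h) ^ 2)

/-- Membership in `H¹`. -/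
def MemH1 (g : Spc N → ℝ) : Prop :=
  MemLp g 2 volume ∧ MemLp (fun x => fderiv ℝ g x) 2 volume

/-- The conserved (damped) energy `E(u, v)`. -/
def energy (p : ℝ) (g h : Spc N → ℝ) : ℝ :=
  (1 / 2) * ∫ x, (‖fderiv ℝ g x‖ ^ 2 + (g x) ^ 2 + (h x) ^ 2 - 2 * Fnl p (g x))

/-- A bound state: a nontrivial `H¹` solution of `-Δq + q - f(q) = 0`. -/
structure IsBoundState (p : ℝ) (q : Spc N → ℝ) : Prop where
  nontrivial : q ≠ 0
  smooth : ContDiff ℝ 2 q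
  memH1 : MemH1 q
  eqn : ∀ x, -lap q x + q x - nl p (q x) = 0

/-- The linearized operator `L_q = -Δ + 1 - f'(q)` applied to `v`. -/
def applyL (p : ℝ) (q v : Spc N → ℝ) (x : Spc N) : ℝ :=
  -lap v x + v x - nl' p (q x) * v x

/-- Membership in the kernel of `L_q`. -/
def InKerL (p : ℝ) (q v : Spc N → ℝ) : Prop :=
  ContDiff ℝ 2 v ∧ MemH1 v ∧ ∀ x, applyL p q v x = 0

/-- The kernel of `L_q`. -/
def KerL (p : ℝ) (q : Spc N → ℝ) : Set (Spc N → ℝ) := {v | InKerL p q v}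

/-- The space `Z_q` spanned by `∂_{x_n} q` and `Ω_{ij} q`. -/
def Zspan (q : Spc N → ℝ) : Submodule ℝ (Spc N → ℝ) :=
  Submodule.span ℝ
    ((Set.range fun n : Fin N => pd n q) ∪ {g | ∃ i j : Fin N, i < j ∧ g = angD i j q})

/-- A bound state is non-degenerate when `Z_q = ker L_q`. -/
def NonDegenerate (p : ℝ) (q : Spc N → ℝ) : Prop :=
  KerL p q = (Zspan q : Set (Spc N → ℝ))

/-- A bound state is degenerate when `Z_q ⊊ ker L_q`. -/
def Degenerate (p : ℝ) (q : Spc N → ℝ) : Prop := ¬NonDegenerate p q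

/-- The third Gateaux differential of the energy at `q`:
`E'''(q)(v, w, z) = -∫ f''(q) v w z`. -/
def E3 (p : ℝ) (q v w z : Spc N → ℝ) : ℝ := -∫ x, nl'' p (q x) * v x * w x * z x

/-- A degree-1 excited state: a degenerate bound state with
`ker L_q = Z_q ⊕ span{φ}` and `E'''(q)(φ,φ,φ) ≠ 0`. -/
def IsDegreeOneExcited (p : ℝ) (q : Spc N → ℝ) : Prop :=
  IsBoundState p q ∧ Degenerate p q ∧
    ∃ φ : Spc N → ℝ, φ ≠ 0 ∧ φ ∉ Zspan q ∧
      KerL p q =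
        ((Zspan q ⊔ Submodule.span ℝ {φ} : Submodule ℝ (Spc N → ℝ)) : Set (Spc N → ℝ)) ∧
      E3 p q φ φ φ ≠ 0

/-- The normalized extra kernel direction `φ` of a degree-1 excited state:
orthogonal to `Z_q`, spanning the extra direction of the kernel, and normalized by
`E'''(q)(φ,φ,φ) = -4α‖φ‖²`. -/
def IsNormalizedDirection (α p : ℝ) (q φ : Spc N → ℝ) : Prop :=
  (∀ n : Fin N, L2inner φ (pd n q) = 0) ∧
    (∀ i j : Fin N, i < j → L2inner φ (angD i j q) = 0) ∧
    φ ≠ 0 ∧ φ ∉ Zspan q ∧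
    KerL p q =
      ((Zspan q ⊔ Submodule.span ℝ {φ} : Submodule ℝ (Spc N → ℝ)) : Set (Spc N → ℝ)) ∧
    E3 p q φ φ φ = -4 * α * (L2norm φ) ^ 2

/-- A (maximal) solution of the damped Klein-Gordon equation
`∂_tt u + 2α ∂_t u - Δu + u - f(u) = 0` on `[0, Tmax) × ℝ^N`,
in the energy space, with the energy dissipation identity and the blow-up criterion. -/
structure Solution (N : ℕ) (α p : ℝ) where
  Tmax : WithTop ℝ
  Tmax_pos : 0 < Tmax
  u : ℝ → Spc N → ℝ
  ut : ℝ → Spc N → ℝ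
  utt : ℝ → Spc N → ℝ
  u_diff : ∀ t : ℝ, 0 ≤ t → (t : WithTop ℝ) < Tmax →
    ∀ x, HasDerivAt (fun s => u s x) (ut t x) t
  ut_diff : ∀ t : ℝ, 0 ≤ t → (t : WithTop ℝ) < Tmax →
    ∀ x, HasDerivAt (fun s => ut s x) (utt t x) t
  eqn : ∀ t : ℝ, 0 ≤ t → (t : WithTop ℝ) < Tmax →
    ∀ x, utt t x + 2 * α * ut t x - lap (u t) x + u t x - nl p (u t x) = 0
  u_mem : ∀ t : ℝ, 0 ≤ t → (t : WithTop ℝ) < Tmax → MemH1 (u t)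
  ut_mem : ∀ t : ℝ, 0 ≤ t → (t : WithTop ℝ) < Tmax → MemLp (ut t) 2 volume
  energy_id : ∀ t₁ t₂ : ℝ, 0 ≤ t₁ → t₁ ≤ t₂ → (t₂ : WithTop ℝ) < Tmax →
    energy p (u t₂) (ut t₂) - energy p (u t₁) (ut t₁) =
      -(2 * α) * ∫ t in Ioc t₁ t₂, (L2norm (ut t)) ^ 2
  blowup : ∀ T : ℝ, Tmax = (T : WithTop ℝ) →
    Tendsto (fun t => H1norm (u t) + L2norm (ut t)) (𝓝[<] T) atTop

/-- A packed solution: along a sequence of times `tₙ → Tmax` and positions `yₙ`,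
`(u, ∂_t u)(tₙ)` converges to `(W₀(·-yₙ), W₁(·-yₙ))` in `H¹ × L²`. -/
structure IsPacked {α p : ℝ} (sol : Solution N α p) (W₀ W₁ : Spc N → ℝ)
    (tn : ℕ → ℝ) (yn : ℕ → Spc N) : Prop where
  htn : ∀ n, 0 ≤ tn n ∧ (tn n : WithTop ℝ) < sol.Tmax
  htop : sol.Tmax = ⊤ → Tendsto tn atTop atTop
  hfin : ∀ T : ℝ, sol.Tmax = (T : WithTop ℝ) → Tendsto tn atTop (𝓝 T)
  hW₀ : MemH1 W₀
  hW₁ : MemLp W₁ 2 volume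
  conv :
    Tendsto
      (fun n =>
        H1norm (fun x => sol.u (tn n) x - W₀ (x - yn n)) +
          L2norm (fun x => sol.ut (tn n) x - W₁ (x - yn n)))
      atTop (𝓝 0)

/-- An `L²`-orthonormal family of eigenfunctions of `L_q` with negative
eigenvalues `-λ_k²`. -/
structure EigenData (p : ℝ) (q : Spc N → ℝ) (K : ℕ) where
  Y : Fin K → Spc N → ℝ
  lam : Fin K → ℝ
  lam_pos : ∀ k, 0 < lam k
  orth : ∀ k k', L2inner (Y k) (Y k') = if k = k' then 1 else 0
  smooth : ∀ k, ContDiff ℝ 2 (Y k)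
  memH1 : ∀ k, MemH1 (Y k)
  eig : ∀ k x, applyL p q (Y k) x = -(lam k) ^ 2 * Y k x

/-- The family exhausts all the negative spectral directions of `L_q`. -/
def EigenData.Complete {p : ℝ} {q : Spc N → ℝ} {K : ℕ} (ed : EigenData p q K) : Prop :=
  ∀ c : ℝ, c < 0 → ∀ v : Spc N → ℝ, ContDiff ℝ 2 v → MemH1 v →
    (∀ x, applyL p q v x = c * v x) → v ∈ Submodule.span ℝ (Set.range ed.Y)

/-- `c` belongs to the essential spectrum of `L_q` (Weyl criterion: there is a
normalized weakly-null singular sequence). -/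
def IsEssSpec (p : ℝ) (q : Spc N → ℝ) (c : ℝ) : Prop :=
  ∃ v : ℕ → Spc N → ℝ,
    (∀ n, ContDiff ℝ 2 (v n) ∧ MemH1 (v n) ∧ L2norm (v n) = 1) ∧
    (∀ g : Spc N → ℝ, MemLp g 2 volume →
      Tendsto (fun n => L2inner (v n) g) atTop (𝓝 0)) ∧
    Tendsto (fun n => L2norm fun x => applyL p q (v n) x - c * v n x) atTop (𝓝 0)

/-- The Givens rotation `G_{ij}(ϑ)` acting on `ℝ^N`. -/
def givens (i j : Fin N) (ϑ : ℝ) (x : Spc N) : Spc N := WithLp.toLp 2 fun k =>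
  if k = i then Real.cos ϑ * x i - Real.sin ϑ * x j
  else if k = j then Real.sin ϑ * x i + Real.cos ϑ * x j
  else x k

/-- The rotation `R_θ`, product of the Givens rotations `G_{ij}(θ_{ij})`
over the index list `I`. -/
def Rrot (I : List (Fin N × Fin N)) (θ : Fin I.length → ℝ) : Spc N → Spc N :=
  (List.finRange I.length).foldr
    (fun k φ => givens (I.get k).1 (I.get k).2 (θ k) ∘ φ) id

/-- `I` is an admissible family of index pairs: the corresponding family
`{∂_{x_n} q ; Ω_{ij} q, (i,j) ∈ I}` is a basis of `Z_q`. -/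
def IsIndexFamily (q : Spc N → ℝ) (I : List (Fin N × Fin N)) : Prop :=
  (∀ ij ∈ I, ij.1 < ij.2) ∧
    LinearIndependent ℝ
      (Sum.elim (fun n : Fin N => pd n q)
        (fun k : Fin I.length => angD (I.get k).1 (I.get k).2 q)) ∧
    (Zspan q : Set (Spc N → ℝ)) =
      (Submodule.span ℝ
          (Set.range
            (Sum.elim (fun n : Fin N => pd n q)
              (fun k : Fin I.length => angD (I.get k).1 (I.get k).2 q))) :
        Set (Spc N → ℝ))

/-- The modulated profile `g(R_θ(· - z))`. -/
def modF (g : Spc N → ℝ) (I : List (Fin N × Fin N)) (z : Spc N)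
    (θ : Fin I.length → ℝ) (x : Spc N) : ℝ := g (Rrot I θ (x - z))

/-- `Ψ_{ij} = ∂Q/∂θ_{ij}`. -/
def modPsi (q : Spc N → ℝ) (I : List (Fin N × Fin N)) (z : Spc N)
    (θ : Fin I.length → ℝ) (k : Fin I.length) (x : Spc N) : ℝ :=
  fderiv ℝ (fun θ' : Fin I.length → ℝ => modF q I z θ' x) θ (Pi.single k 1)

/-- The modulation setting on a time interval `[T₁, T₂]`: a solution of the damped
Klein-Gordon equation together with `C¹` modulation parameters `(z, ℓ, θ, β, a, b)`
and a remainder `φ⃗ = (φ₁, φ₂)` satisfying the decomposition and the orthogonality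
conditions (with the convention `a = b = 0` when `φq = 0`, i.e. in the
non-degenerate case). -/
structure ModSetting (N : ℕ) (α p : ℝ) (q φq : Spc N → ℝ) (I : List (Fin N × Fin N))
    (T₁ T₂ : ℝ) where
  u : ℝ → Spc N → ℝ
  ut : ℝ → Spc N → ℝ
  utt : ℝ → Spc N → ℝ
  u_diff : ∀ t ∈ Icc T₁ T₂, ∀ x, HasDerivWithinAt (fun s => u s x) (ut t x) (Icc T₁ T₂) t
  ut_diff : ∀ t ∈ Icc T₁ T₂, ∀ x, HasDerivWithinAt (fun s => ut s x) (utt t x) (Icc T₁ T₂) t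
  eqn : ∀ t ∈ Icc T₁ T₂, ∀ x,
    utt t x + 2 * α * ut t x - lap (u t) x + u t x - nl p (u t x) = 0
  z : ℝ → Spc N
  ℓ : ℝ → Spc N
  θ : ℝ → Fin I.length → ℝ
  β : ℝ → Fin I.length → ℝ
  a : ℝ → ℝ
  b : ℝ → ℝ
  z' : ℝ → Spc N
  ℓ' : ℝ → Spc N
  θ' : ℝ → Fin I.length → ℝ
  β' : ℝ → Fin I.length → ℝ
  a' : ℝ → ℝ
  b' : ℝ → ℝ
  z_diff : ∀ t ∈ Icc T₁ T₂, HasDerivWithinAt z (z' t) (Icc T₁ T₂) t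
  ℓ_diff : ∀ t ∈ Icc T₁ T₂, HasDerivWithinAt ℓ (ℓ' t) (Icc T₁ T₂) t
  θ_diff : ∀ t ∈ Icc T₁ T₂, HasDerivWithinAt θ (θ' t) (Icc T₁ T₂) t
  β_diff : ∀ t ∈ Icc T₁ T₂, HasDerivWithinAt β (β' t) (Icc T₁ T₂) t
  a_diff : ∀ t ∈ Icc T₁ T₂, HasDerivWithinAt a (a' t) (Icc T₁ T₂) t
  b_diff : ∀ t ∈ Icc T₁ T₂, HasDerivWithinAt b (b' t) (Icc T₁ T₂) t
  z'_cont : ContinuousOn z' (Icc T₁ T₂)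
  ℓ'_cont : ContinuousOn ℓ' (Icc T₁ T₂)
  θ'_cont : ContinuousOn θ' (Icc T₁ T₂)
  β'_cont : ContinuousOn β' (Icc T₁ T₂)
  a'_cont : ContinuousOn a' (Icc T₁ T₂)
  b'_cont : ContinuousOn b' (Icc T₁ T₂)
  φ1 : ℝ → Spc N → ℝ
  φ2 : ℝ → Spc N → ℝ
  decomp1 : ∀ t ∈ Icc T₁ T₂, ∀ x,
    u t x = modF q I (z t) (θ t) x + a t * modF φq I (z t) (θ t) x + φ1 t x
  decomp2 : ∀ t ∈ Icc T₁ T₂, ∀ x,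
    ut t x = -(fderiv ℝ (modF q I (z t) (θ t)) x (ℓ t)) +
      (∑ k : Fin I.length, β t k * modPsi q I (z t) (θ t) k x) +
      b t * modF φq I (z t) (θ t) x + φ2 t x
  orth1 : ∀ t ∈ Icc T₁ T₂,
    (∀ n : Fin N, L2inner (φ1 t) (pd n (modF q I (z t) (θ t))) = 0) ∧
    (∀ k : Fin I.length, L2inner (φ1 t) (modPsi q I (z t) (θ t) k) = 0) ∧
    L2inner (φ1 t) (modF φq I (z t) (θ t)) = 0
  orth2 : ∀ t ∈ Icc T₁ T₂,
    (∀ n : Fin N, L2inner (φ2 t) (pd n (modF q I (z t) (θ t))) = 0) ∧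
    (∀ k : Fin I.length, L2inner (φ2 t) (modPsi q I (z t) (θ t) k) = 0) ∧
    L2inner (φ2 t) (modF φq I (z t) (θ t)) = 0
  nondeg_conv : φq = 0 → ∀ t, a t = 0 ∧ b t = 0

variable {α p : ℝ} {q φq : Spc N → ℝ} {I : List (Fin N × Fin N)} {T₁ T₂ : ℝ}

/-- The quantity `𝒩 = ‖φ⃗‖_ℋ + |ℓ| + |β| + |b|`. -/
def ModSetting.calN (ms : ModSetting N α p q φq I T₁ T₂) (t : ℝ) : ℝ :=
  HcalNorm (ms.φ1 t) (ms.φ2 t) + ‖ms.ℓ t‖ + ‖ms.β t‖ + |ms.b t|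

/-- The solution stays within `γ` of the orbit of `q` on `[T₁, T₂]`. -/
def ModSetting.Close (ms : ModSetting N α p q φq I T₁ T₂) (γ : ℝ) : Prop :=
  ∀ t ∈ Icc T₁ T₂,
    (⨅ ξ : Spc N, H1norm fun x => ms.u t x - q (x - ξ)) + L2norm (ms.ut t) < γ

/-- Smallness of the modulation parameters and of the remainder. -/
def ModSetting.Small (ms : ModSetting N α p q φq I T₁ T₂) (γ : ℝ) : Prop :=
  ∀ t ∈ Icc T₁ T₂, ms.calN t + ‖ms.θ t‖ + |ms.a t| ≤ γ

/-- `Q + V` where `Q = q(R_θ(·-z))` and `V = aΦ`. -/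
def ModSetting.QV (ms : ModSetting N α p q φq I T₁ T₂) (t : ℝ) (x : Spc N) : ℝ :=
  modF q I (ms.z t) (ms.θ t) x + ms.a t * modF φq I (ms.z t) (ms.θ t) x

/-- The nonlinear energy functional `𝓔` (with `ρ = 2α - μ`). -/
def ModSetting.Efun (ms : ModSetting N α p q φq I T₁ T₂) (μ : ℝ) (t : ℝ) : ℝ :=
  (∫ x,
      (‖fderiv ℝ (ms.φ1 t) x‖ ^ 2 + (1 - (2 * α - μ) * μ) * (ms.φ1 t x) ^ 2 +
        (ms.φ2 t x + μ * ms.φ1 t x) ^ 2)) -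
    2 * ∫ x,
      (Fnl p (ms.QV t x + ms.φ1 t x) - Fnl p (ms.QV t x) - nl p (ms.QV t x) * ms.φ1 t x)

/-- `R₁ = a + b/(2α)`. -/
def ModSetting.R1 (ms : ModSetting N α p q φq I T₁ T₂) (t : ℝ) : ℝ :=
  ms.a t + ms.b t / (2 * α)

/-- `R₂ = (2α/3) a³ + (1/(2α)) a b² + a² b`. -/
def ModSetting.R2 (ms : ModSetting N α p q φq I T₁ T₂) (t : ℝ) : ℝ :=
  2 * α / 3 * (ms.a t) ^ 3 + 1 / (2 * α) * (ms.a t * (ms.b t) ^ 2) + (ms.a t) ^ 2 * ms.b t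

/-- The exponential-direction coefficients `a_k^± = ⟨φ⃗, Z⃗_k^±⟩`
(`sgn = 1` for `+`, `sgn = -1` for `-`). -/
def ModSetting.acoef (ms : ModSetting N α p q φq I T₁ T₂) {K : ℕ} (ed : EigenData p q K)
    (k : Fin K) (sgn : ℝ) (t : ℝ) : ℝ :=
  (α + sgn * Real.sqrt (α ^ 2 + ed.lam k ^ 2)) *
      L2inner (ms.φ1 t) (modF (ed.Y k) I (ms.z t) (ms.θ t)) +
    L2inner (ms.φ2 t) (modF (ed.Y k) I (ms.z t) (ms.θ t))

/-- The damped components `S = |ℓ|² + |β|² + Σ (a_k^-)² + b²`. -/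
def ModSetting.Sfun (ms : ModSetting N α p q φq I T₁ T₂) {K : ℕ} (ed : EigenData p q K)
    (t : ℝ) : ℝ :=
  ‖ms.ℓ t‖ ^ 2 + ‖ms.β t‖ ^ 2 + (∑ k, (ms.acoef ed k (-1) t) ^ 2) + (ms.b t) ^ 2

/-- The unstable components `𝓐 = Σ (a_k^+)²`. -/
def ModSetting.Afun (ms : ModSetting N α p q φq I T₁ T₂) {K : ℕ} (ed : EigenData p q K)
    (t : ℝ) : ℝ := ∑ k, (ms.acoef ed k 1 t) ^ 2

/-- `𝓕 = 𝓔 + μ⁻¹ S`. -/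
def ModSetting.Ffun (ms : ModSetting N α p q φq I T₁ T₂) {K : ℕ} (ed : EigenData p q K)
    (μ : ℝ) (t : ℝ) : ℝ := ms.Efun μ t + μ⁻¹ * ms.Sfun ed t


-- === Auxiliary development for Statement 7 ===
section CancelAux
open Real

/-! ### Scalar calculus lemmas for the nonlinearity -/

lemma CancelAux.tendsto_abs_rpow_zero {e : ℝ} (he : 0 < e) :
    Filter.Tendsto (fun t : ℝ => |t| ^ e) (𝓝 0) (𝓝 0) := by
  have h1 : ContinuousAt (fun u : ℝ => u ^ e) 0 :=
    Real.continuousAt_rpow_const 0 e (Or.inr he.le)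
  have h2 : Filter.Tendsto (fun t : ℝ => |t|) (𝓝 0) (𝓝 0) := by
    simpa using continuous_abs.tendsto (0:ℝ)
  have := h1.tendsto.comp h2
  simpa [Function.comp_def, Real.zero_rpow he.ne'] using this

lemma CancelAux.abs_rpow_hasDerivAt {r : ℝ} (hr : 1 < r) (s : ℝ) :
    HasDerivAt (fun t : ℝ => |t| ^ r) (r * |s| ^ (r - 2) * s) s := by
  rcases lt_trichotomy s 0 with hs | rfl | hs
  · have hev : (fun t : ℝ => (-t) ^ r) =ᶠ[𝓝 s] fun t : ℝ => |t| ^ r := by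
      filter_upwards [eventually_lt_nhds hs] with t ht
      rw [abs_of_neg ht]
    have h1 : HasDerivAt (fun t : ℝ => (-t) ^ r) (r * (-s) ^ (r - 1) * (-1)) s := by
      have h2 := Real.hasDerivAt_rpow_const (x := -s) (p := r) (Or.inl (by linarith))
      simpa [Function.comp_def] using h2.comp s ((hasDerivAt_id s).neg)
    have h3 := h1.congr_of_eventuallyEq hev.symm
    refine h3.congr_deriv ?_
    rw [abs_of_neg hs]
    have : (-s) ^ (r - 1) = (-s) ^ (r - 2) * (-s) := by
      rw [← Real.rpow_add_one (by linarith : (-s) ≠ 0)]; ring_nf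
    rw [this]; ring
  · have h0 : |(0:ℝ)| ^ r = 0 := by
      simp [Real.zero_rpow (by linarith : r ≠ 0)]
    rw [mul_zero]
    rw [hasDerivAt_iff_tendsto_slope]
    apply squeeze_zero_norm' (a := fun t : ℝ => |t| ^ (r - 1))
    · filter_upwards [self_mem_nhdsWithin] with t ht
      have ht' : (t:ℝ) ≠ 0 := ht
      have habs : |t| ≠ 0 := abs_ne_zero.mpr ht'
      have hsp : |t| ^ r = |t| ^ (r - 1) * |t| := by
        rw [← Real.rpow_add_one habs]; ring_nf
      rw [slope_def_field, h0]
      rw [show ((|t| ^ r - 0) / (t - 0) : ℝ) = |t| ^ r / t by ring_nf]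
      rw [hsp, norm_div, Real.norm_eq_abs, Real.norm_eq_abs, abs_mul, abs_abs,
        abs_of_nonneg (Real.rpow_nonneg (abs_nonneg t) _), mul_div_assoc,
        div_self habs, mul_one]
    · exact (CancelAux.tendsto_abs_rpow_zero (by linarith)).mono_left nhdsWithin_le_nhds
  · have hev : (fun t : ℝ => t ^ r) =ᶠ[𝓝 s] fun t : ℝ => |t| ^ r := by
      filter_upwards [eventually_gt_nhds hs] with t ht
      rw [abs_of_pos ht]
    have h2 := Real.hasDerivAt_rpow_const (x := s) (p := r) (Or.inl hs.ne')
    have h3 := h2.congr_of_eventuallyEq hev.symm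
    refine h3.congr_deriv ?_
    rw [abs_of_pos hs]
    have : s ^ (r - 1) = s ^ (r - 2) * s := by
      rw [← Real.rpow_add_one hs.ne']; ring_nf
    rw [this]; ring

lemma CancelAux.continuous_abs_rpow_mul {e : ℝ} (he : 0 < e) :
    Continuous (fun s : ℝ => |s| ^ (e - 1) * s) := by
  rw [continuous_iff_continuousAt]
  intro s
  rcases eq_or_ne s 0 with rfl | hs
  · have hb : ∀ t : ℝ, ‖|t| ^ (e - 1) * t‖ ≤ |t| ^ e := by
      intro t
      rcases eq_or_ne t 0 with rfl | ht
      · simp [Real.zero_rpow he.ne']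
      · have habs : |t| ≠ 0 := abs_ne_zero.mpr ht
        rw [norm_mul, Real.norm_eq_abs, Real.norm_eq_abs,
          abs_of_nonneg (Real.rpow_nonneg (abs_nonneg t) _),
          show e = (e - 1) + 1 by ring, Real.rpow_add_one habs]
        norm_num
    have : Filter.Tendsto (fun t : ℝ => |t| ^ (e - 1) * t) (𝓝 0) (𝓝 0) :=
      squeeze_zero_norm hb (CancelAux.tendsto_abs_rpow_zero he)
    simpa [ContinuousAt, Real.zero_rpow, he.ne'] using this
  · exact ((continuous_abs.continuousAt).rpow_const
      (Or.inl (abs_ne_zero.mpr hs))).mul continuousAt_id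

namespace DKG
namespace CancelAux

variable {p : ℝ}

lemma hasDerivAt_nl' (hp : 2 < p) (s : ℝ) :
    HasDerivAt (nl' p) (nl'' p s) s := by
  have h := (CancelAux.abs_rpow_hasDerivAt (r := p - 1) (by linarith) s).const_mul p
  have he : nl' p = fun t => p * |t| ^ (p - 1) := rfl
  rw [he]
  refine h.congr_deriv (Eq.symm ?_)
  show p * (p - 1) * |s| ^ (p - 3) * s = p * ((p - 1) * |s| ^ (p - 1 - 2) * s)
  ring_nf

lemma continuous_nl' (hp : 2 < p) : Continuous (nl' p) :=
  continuous_const.mul (continuous_abs.rpow_const fun _ => Or.inr (by linarith))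

lemma continuous_nl'' (hp : 2 < p) : Continuous (nl'' p) := by
  have h := CancelAux.continuous_abs_rpow_mul (e := p - 2) (by linarith)
  have : nl'' p = fun s => (p * (p - 1)) * (|s| ^ ((p - 2) - 1) * s) := by
    funext s
    show p * (p - 1) * |s| ^ (p - 3) * s = _
    ring_nf
  rw [this]
  exact continuous_const.mul h

lemma contDiff_one_nl' (hp : 2 < p) : ContDiff ℝ 1 (nl' p) := by
  rw [contDiff_one_iff_deriv]
  refine ⟨fun s => (hasDerivAt_nl' hp s).differentiableAt, ?_⟩
  have : deriv (nl' p) = nl'' p := funext fun s => (hasDerivAt_nl' hp s).deriv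
  rw [this]
  exact continuous_nl'' hp

end CancelAux
end DKG
end CancelAux
-- continue inside namespace DKG, namespace CancelAux assumed open in final assembly
namespace CancelAuxB
open Real MeasureTheory Filter Topology

/-! ### One-dimensional smooth transition facts -/

noncomputable def st : ℝ → ℝ := Real.smoothTransition
noncomputable def st' : ℝ → ℝ := deriv st
noncomputable def st'' : ℝ → ℝ := deriv st'

lemma st_contDiff {n : ℕ∞} : ContDiff ℝ n st := Real.smoothTransition.contDiff

lemma st'_contDiff {n : ℕ∞} : ContDiff ℝ n st' := by
  have h : ContDiff ℝ ((n : WithTop ℕ∞) + 1) st := st_contDiff (n := n + 1)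
  exact (contDiff_succ_iff_deriv.mp h).2.2

lemma st''_contDiff {n : ℕ∞} : ContDiff ℝ n st'' := by
  have h : ContDiff ℝ ((n : WithTop ℕ∞) + 1) st' := st'_contDiff (n := n + 1)
  exact (contDiff_succ_iff_deriv.mp h).2.2

lemma st_hasDerivAt (t : ℝ) : HasDerivAt st (st' t) t :=
  ((st_contDiff (n := 1)).differentiable (by simp) t).hasDerivAt

lemma st'_hasDerivAt (t : ℝ) : HasDerivAt st' (st'' t) t :=
  ((st'_contDiff (n := 1)).differentiable (by simp) t).hasDerivAt

-- vanishing of a continuous function on closure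
private lemma vanish_boundary {g : ℝ → ℝ} (hg : Continuous g) {s : Set ℝ} {a : ℝ}
    (h : ∀ t ∈ s, g t = 0) (ha : a ∈ closure s) : g a = 0 := by
  have : Set.EqOn g (fun _ => (0:ℝ)) (closure s) :=
    Set.EqOn.closure (fun t ht => h t ht) hg continuous_const
  exact this ha

lemma st'_eq_zero_of_nonpos {t : ℝ} (ht : t ≤ 0) : st' t = 0 := by
  have hlt : ∀ u ∈ Set.Iio (0:ℝ), st' u = 0 := by
    intro u hu
    have hev : st =ᶠ[𝓝 u] fun _ => (0:ℝ) := by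
      filter_upwards [eventually_lt_nhds hu] with r hr
      exact Real.smoothTransition.zero_of_nonpos hr.le
    rw [st', hev.deriv_eq, deriv_const]
  rcases lt_or_eq_of_le ht with h | rfl
  · exact hlt t h
  · exact vanish_boundary ((st'_contDiff (n := 0)).continuous) hlt
      (by simp [closure_Iio])

lemma st'_eq_zero_of_one_le {t : ℝ} (ht : 1 ≤ t) : st' t = 0 := by
  have hlt : ∀ u ∈ Set.Ioi (1:ℝ), st' u = 0 := by
    intro u hu
    have hev : st =ᶠ[𝓝 u] fun _ => (1:ℝ) := by
      filter_upwards [eventually_gt_nhds hu] with r hr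
      exact Real.smoothTransition.one_of_one_le hr.le
    rw [st', hev.deriv_eq, deriv_const]
  rcases lt_or_eq_of_le ht with h | rfl
  · exact hlt t h
  · exact vanish_boundary ((st'_contDiff (n := 0)).continuous) hlt
      (by simp [closure_Ioi])

lemma st''_eq_zero_of_nonpos {t : ℝ} (ht : t ≤ 0) : st'' t = 0 := by
  have hlt : ∀ u ∈ Set.Iio (0:ℝ), st'' u = 0 := by
    intro u hu
    have hev : st' =ᶠ[𝓝 u] fun _ => (0:ℝ) := by
      filter_upwards [eventually_lt_nhds hu] with r hr
      exact st'_eq_zero_of_nonpos hr.le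
    rw [st'', hev.deriv_eq, deriv_const]
  rcases lt_or_eq_of_le ht with h | rfl
  · exact hlt t h
  · exact vanish_boundary ((st''_contDiff (n := 0)).continuous) hlt
      (by simp [closure_Iio])

lemma st''_eq_zero_of_one_le {t : ℝ} (ht : 1 ≤ t) : st'' t = 0 := by
  have hlt : ∀ u ∈ Set.Ioi (1:ℝ), st'' u = 0 := by
    intro u hu
    have hev : st' =ᶠ[𝓝 u] fun _ => (0:ℝ) := by
      filter_upwards [eventually_gt_nhds hu] with r hr
      exact st'_eq_zero_of_one_le hr.le
    rw [st'', hev.deriv_eq, deriv_const]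
  rcases lt_or_eq_of_le ht with h | rfl
  · exact hlt t h
  · exact vanish_boundary ((st''_contDiff (n := 0)).continuous) hlt
      (by simp [closure_Ioi])

private lemma bounded_of_vanishing {g : ℝ → ℝ} (hg : Continuous g)
    (h0 : ∀ t ≤ (0:ℝ), g t = 0) (h1 : ∀ t, (1:ℝ) ≤ t → g t = 0) :
    ∃ C : ℝ, 0 ≤ C ∧ ∀ t, |g t| ≤ C := by
  obtain ⟨C, hC⟩ := (isCompact_Icc (a := (0:ℝ)) (b := 1)).exists_bound_of_continuousOn
    hg.continuousOn
  refine ⟨max C 0, le_max_right _ _, fun t => ?_⟩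
  rcases le_or_gt t 0 with h | h
  · simp [h0 t h]
  rcases le_or_gt 1 t with h' | h'
  · simp [h1 t h']
  · exact le_trans (by simpa using hC t ⟨h.le, h'.le⟩) (le_max_left _ _)

lemma st'_bound : ∃ C : ℝ, 0 ≤ C ∧ ∀ t, |st' t| ≤ C :=
  bounded_of_vanishing ((st'_contDiff (n := 0)).continuous)
    (fun _ h => st'_eq_zero_of_nonpos h) fun _ h => st'_eq_zero_of_one_le h

lemma st''_bound : ∃ C : ℝ, 0 ≤ C ∧ ∀ t, |st'' t| ≤ C :=
  bounded_of_vanishing ((st''_contDiff (n := 0)).continuous)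
    (fun _ h => st''_eq_zero_of_nonpos h) fun _ h => st''_eq_zero_of_one_le h

end CancelAuxB
namespace CancelAuxB
open Real MeasureTheory Filter Topology
open scoped RealInnerProductSpace

variable {N : ℕ}

/-! ### The radial cutoff family -/

noncomputable def Rn (n : ℕ) : ℝ := n + 1

lemma Rn_pos (n : ℕ) : 0 < Rn n := by simp only [Rn]; positivity
lemma Rn_ge_one (n : ℕ) : 1 ≤ Rn n := by simp [Rn]

noncomputable def cutArg (n : ℕ) (x : Spc N) : ℝ := 4 / 3 - 1 / (3 * Rn n ^ 2) * ‖x‖ ^ 2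

noncomputable def cut (n : ℕ) (x : Spc N) : ℝ := st (cutArg n x)

noncomputable def dArg (n : ℕ) (x : Spc N) : Spc N →L[ℝ] ℝ :=
  (-2 / (3 * Rn n ^ 2)) • innerSL ℝ x

noncomputable def kc (n : ℕ) (x : Spc N) : ℝ := st' (cutArg n x) * (-2 / (3 * Rn n ^ 2))

lemma hasFDerivAt_cutArg (n : ℕ) (x : Spc N) : HasFDerivAt (cutArg n) (dArg n x) x := by
  have h := (hasStrictFDerivAt_norm_sq x).hasFDerivAt
  have h2 := (h.const_mul (1 / (3 * Rn n ^ 2))).const_sub (4 / 3)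
  have hE : (fun y : Spc N => 4 / 3 - 1 / (3 * Rn n ^ 2) * ‖y‖ ^ 2) = cutArg n := rfl
  rw [hE] at h2
  refine h2.congr_fderiv (Eq.symm ?_)
  ext y
  simp only [dArg, ContinuousLinearMap.neg_apply, ContinuousLinearMap.smul_apply,
    smul_eq_mul, two_smul, ContinuousLinearMap.add_apply, innerSL_apply_apply]
  ring

lemma hasFDerivAt_cut (n : ℕ) (x : Spc N) :
    HasFDerivAt (cut n) (kc n x • innerSL ℝ x) x := by
  have h := (st_hasDerivAt (cutArg n x)).comp_hasFDerivAt x (hasFDerivAt_cutArg n x)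
  refine h.congr_fderiv (Eq.symm ?_)
  ext y
  simp [kc, dArg, smul_smul]

lemma fderiv_cut_apply (n : ℕ) (x v : Spc N) :
    fderiv ℝ (cut n) x v = kc n x * ⟪x, v⟫ := by
  rw [(hasFDerivAt_cut n x).fderiv]
  simp

lemma contDiff_cut (n : ℕ) {m : ℕ∞} : ContDiff ℝ m (cut (N := N) n) := by
  apply (st_contDiff (n := m)).comp
  have h : ContDiff ℝ m (fun x : Spc N => ‖x‖ ^ 2) := contDiff_norm_sq (𝕜 := ℝ)
  exact contDiff_const.sub (contDiff_const.mul h)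

lemma cutArg_ge_one {n : ℕ} {x : Spc N} (h : ‖x‖ ≤ Rn n) : 1 ≤ cutArg n x := by
  have h2 : ‖x‖ ^ 2 ≤ Rn n ^ 2 := by
    apply pow_le_pow_left₀ (norm_nonneg x) h
  have hR := Rn_pos n
  have e1 : 1 / (3 * Rn n ^ 2) * ‖x‖ ^ 2 ≤ 1 / (3 * Rn n ^ 2) * Rn n ^ 2 :=
    mul_le_mul_of_nonneg_left h2 (by positivity)
  have e2 : 1 / (3 * Rn n ^ 2) * Rn n ^ 2 = 1 / 3 := by field_simp
  rw [cutArg]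
  linarith

lemma cutArg_nonpos {n : ℕ} {x : Spc N} (h : 2 * Rn n ≤ ‖x‖) : cutArg n x ≤ 0 := by
  have h2 : (2 * Rn n) ^ 2 ≤ ‖x‖ ^ 2 := by
    apply pow_le_pow_left₀ (mul_nonneg (by norm_num) (Rn_pos n).le) h
  have hR := Rn_pos n
  have h2' : 4 * Rn n ^ 2 ≤ ‖x‖ ^ 2 := by nlinarith
  have e1 : 1 / (3 * Rn n ^ 2) * (4 * Rn n ^ 2) ≤ 1 / (3 * Rn n ^ 2) * ‖x‖ ^ 2 :=
    mul_le_mul_of_nonneg_left h2' (by positivity)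
  have e2 : 1 / (3 * Rn n ^ 2) * (4 * Rn n ^ 2) = 4 / 3 := by field_simp
  rw [cutArg]
  linarith

end CancelAuxB
namespace CancelAuxB
open Real MeasureTheory Filter Topology
open scoped RealInnerProductSpace

variable {N : ℕ}

lemma cut_eq_one {n : ℕ} {x : Spc N} (h : ‖x‖ ≤ Rn n) : cut n x = 1 :=
  Real.smoothTransition.one_of_one_le (cutArg_ge_one h)

lemma cut_eq_zero {n : ℕ} {x : Spc N} (h : 2 * Rn n ≤ ‖x‖) : cut n x = 0 :=
  Real.smoothTransition.zero_of_nonpos (cutArg_nonpos h)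

lemma kc_eq_zero_inner {n : ℕ} {x : Spc N} (h : ‖x‖ ≤ Rn n) : kc n x = 0 := by
  rw [kc, st'_eq_zero_of_one_le (cutArg_ge_one h), zero_mul]

lemma kc_eq_zero_outer {n : ℕ} {x : Spc N} (h : 2 * Rn n ≤ ‖x‖) : kc n x = 0 := by
  rw [kc, st'_eq_zero_of_nonpos (cutArg_nonpos h), zero_mul]

lemma cut_nonneg (n : ℕ) (x : Spc N) : 0 ≤ cut n x := Real.smoothTransition.nonneg _
lemma cut_le_one (n : ℕ) (x : Spc N) : cut n x ≤ 1 := Real.smoothTransition.le_one _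

lemma hasCompactSupport_cut (n : ℕ) : HasCompactSupport (cut (N := N) n) := by
  apply HasCompactSupport.intro (isCompact_closedBall (0 : Spc N) (2 * Rn n))
  intro y hy
  apply cut_eq_zero
  simp only [Metric.mem_closedBall, dist_zero_right, not_le] at hy
  exact hy.le

lemma kc_abs_le {C1 : ℝ} (hb : ∀ t, |st' t| ≤ C1) (n : ℕ) (x : Spc N) :
    |kc n x| ≤ C1 * (2 / (3 * Rn n ^ 2)) := by
  rw [kc, abs_mul]
  apply mul_le_mul (hb _) (le_of_eq ?_) (abs_nonneg _) (le_trans (abs_nonneg _) (hb 0))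
  rw [abs_div, abs_neg]
  rw [abs_of_nonneg (by positivity : (0:ℝ) ≤ 3 * Rn n ^ 2)]
  norm_num

/-- First derivative bound, with a norm weight available. -/
lemma fderiv_cut_weight_bound : ∃ C : ℝ, 0 ≤ C ∧ ∀ (n : ℕ) (x v : Spc N),
    (1 + ‖x‖) * |fderiv ℝ (cut n) x v| ≤ C * ‖v‖ := by
  obtain ⟨C1, hC1, hb⟩ := st'_bound
  refine ⟨6 * C1, by positivity, fun n x v => ?_⟩
  rcases le_or_gt ‖x‖ (2 * Rn n) with h | h
  · have hR := Rn_pos n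
    have h1 := Rn_ge_one n
    rw [fderiv_cut_apply]
    have e1 : |kc n x * ⟪x, v⟫| ≤ (C1 * (2 / (3 * Rn n ^ 2))) * (‖x‖ * ‖v‖) := by
      rw [abs_mul]
      exact mul_le_mul (kc_abs_le hb n x) (abs_real_inner_le_norm x v)
        (abs_nonneg _) (by positivity)
    have e2 : (1 + ‖x‖) * |kc n x * ⟪x, v⟫| ≤
        (1 + ‖x‖) * ((C1 * (2 / (3 * Rn n ^ 2))) * (‖x‖ * ‖v‖)) :=
      mul_le_mul_of_nonneg_left e1 (by positivity)
    refine le_trans e2 ?_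
    have e3 : (1 + ‖x‖) * ((C1 * (2 / (3 * Rn n ^ 2))) * (‖x‖ * ‖v‖)) =
        C1 * (2 / (3 * Rn n ^ 2) * ((1 + ‖x‖) * ‖x‖)) * ‖v‖ := by ring
    rw [e3]
    have e4 : 2 / (3 * Rn n ^ 2) * ((1 + ‖x‖) * ‖x‖) ≤ 6 := by
      rw [div_mul_eq_mul_div, div_le_iff₀ (by positivity)]
      nlinarith [norm_nonneg x]
    have e5 : C1 * (2 / (3 * Rn n ^ 2) * ((1 + ‖x‖) * ‖x‖)) ≤ C1 * 6 := by
      apply mul_le_mul_of_nonneg_left e4 hC1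
    calc C1 * (2 / (3 * Rn n ^ 2) * ((1 + ‖x‖) * ‖x‖)) * ‖v‖
        ≤ C1 * 6 * ‖v‖ := mul_le_mul_of_nonneg_right e5 (norm_nonneg v)
      _ = 6 * C1 * ‖v‖ := by ring
  · rw [fderiv_cut_apply, kc_eq_zero_outer h.le]
    simp
    positivity

end CancelAuxB
namespace CancelAuxB
open Real MeasureTheory Filter Topology
open scoped RealInnerProductSpace

variable {N : ℕ}

noncomputable def kd (n : ℕ) (x : Spc N) : ℝ :=
  st'' (cutArg n x) * (-2 / (3 * Rn n ^ 2)) * (-2 / (3 * Rn n ^ 2))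

lemma hasFDerivAt_kc (n : ℕ) (x : Spc N) :
    HasFDerivAt (kc n) (kd n x • innerSL ℝ x) x := by
  have h := ((st'_hasDerivAt (cutArg n x)).comp_hasFDerivAt x
    (hasFDerivAt_cutArg n x)).mul_const (-2 / (3 * Rn n ^ 2))
  refine h.congr_fderiv (Eq.symm ?_)
  ext y
  simp only [kd, dArg, ContinuousLinearMap.smul_apply, smul_eq_mul,
    ContinuousLinearMap.coe_smul', Pi.smul_apply]
  ring

lemma hasFDerivAt_inner_right (v x : Spc N) :
    HasFDerivAt (fun y : Spc N => (⟪y, v⟫ : ℝ)) (innerSL ℝ v) x := by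
  have he : (fun y : Spc N => (⟪y, v⟫ : ℝ)) = fun y => (⟪v, y⟫ : ℝ) :=
    funext fun y => real_inner_comm v y
  rw [he]
  exact (innerSL ℝ v).hasFDerivAt

noncomputable def cutD (n : ℕ) (v : Spc N) : Spc N → ℝ := fun y => kc n y * ⟪y, v⟫

lemma cutD_eq (n : ℕ) (v : Spc N) :
    (fun y : Spc N => fderiv ℝ (cut n) y v) = cutD n v :=
  funext fun y => fderiv_cut_apply n y v

lemma hasFDerivAt_cutD (n : ℕ) (v x : Spc N) :
    HasFDerivAt (cutD n v)
      (kc n x • innerSL ℝ v + (⟪x, v⟫ : ℝ) • (kd n x • innerSL ℝ x)) x :=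
  (hasFDerivAt_kc n x).mul (hasFDerivAt_inner_right v x)

lemma fderiv_cutD_apply (n : ℕ) (v x w : Spc N) :
    fderiv ℝ (cutD n v) x w = kc n x * ⟪v, w⟫ + ⟪x, v⟫ * (kd n x * ⟪x, w⟫) := by
  rw [(hasFDerivAt_cutD n v x).fderiv]
  simp

lemma kd_abs_le {C2 : ℝ} (hb : ∀ t, |st'' t| ≤ C2) (n : ℕ) (x : Spc N) :
    |kd n x| ≤ C2 * (2 / (3 * Rn n ^ 2)) * (2 / (3 * Rn n ^ 2)) := by
  rw [kd, abs_mul, abs_mul]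
  have habs : |(-2 / (3 * Rn n ^ 2))| = 2 / (3 * Rn n ^ 2) := by
    rw [abs_div, abs_neg, abs_of_nonneg (by positivity : (0:ℝ) ≤ 3 * Rn n ^ 2)]
    norm_num
  rw [habs]
  have h2 : (0:ℝ) ≤ 2 / (3 * Rn n ^ 2) := by positivity
  apply mul_le_mul_of_nonneg_right _ h2
  exact mul_le_mul_of_nonneg_right (hb _) h2

lemma kd_eq_zero_inner {n : ℕ} {x : Spc N} (h : ‖x‖ ≤ Rn n) : kd n x = 0 := by
  rw [kd, st''_eq_zero_of_one_le (cutArg_ge_one h), zero_mul, zero_mul]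

lemma kd_eq_zero_outer {n : ℕ} {x : Spc N} (h : 2 * Rn n ≤ ‖x‖) : kd n x = 0 := by
  rw [kd, st''_eq_zero_of_nonpos (cutArg_nonpos h), zero_mul, zero_mul]

/-- Second derivative bound for the cutoff. -/
lemma fderiv_cutD_bound : ∃ C : ℝ, 0 ≤ C ∧ ∀ (n : ℕ) (x v w : Spc N),
    |fderiv ℝ (cutD n v) x w| ≤ C * (‖v‖ * ‖w‖) := by
  obtain ⟨C1, hC1, hb1⟩ := st'_bound
  obtain ⟨C2, hC2, hb2⟩ := st''_bound
  refine ⟨C1 + 2 * C2, by positivity, fun n x v w => ?_⟩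
  have hR := Rn_pos n
  have h1 := Rn_ge_one n
  rw [fderiv_cutD_apply]
  have hterm1 : |kc n x * ⟪v, w⟫| ≤ C1 * (‖v‖ * ‖w‖) := by
    rw [abs_mul]
    have e1 : |kc n x| ≤ C1 := by
      refine le_trans (kc_abs_le hb1 n x) ?_
      have : 2 / (3 * Rn n ^ 2) ≤ 1 := by
        rw [div_le_one (by positivity)]
        nlinarith
      nlinarith
    exact mul_le_mul e1 (abs_real_inner_le_norm v w) (abs_nonneg _) hC1
  have hterm2 : |⟪x, v⟫ * (kd n x * ⟪x, w⟫)| ≤ 2 * C2 * (‖v‖ * ‖w‖) := by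
    rcases le_or_gt ‖x‖ (2 * Rn n) with h | h
    · have e2 : |⟪x, v⟫ * (kd n x * ⟪x, w⟫)| ≤
          (‖x‖ * ‖v‖) * ((C2 * (2 / (3 * Rn n ^ 2)) * (2 / (3 * Rn n ^ 2))) * (‖x‖ * ‖w‖)) := by
        rw [abs_mul, abs_mul]
        apply mul_le_mul (abs_real_inner_le_norm x v)
        · apply mul_le_mul (kd_abs_le hb2 n x) (abs_real_inner_le_norm x w)
            (abs_nonneg _) (by positivity)
        · positivity
        · positivity
      refine le_trans e2 ?_
      have e3 : (‖x‖ * ‖v‖) * ((C2 * (2 / (3 * Rn n ^ 2)) * (2 / (3 * Rn n ^ 2))) * (‖x‖ * ‖w‖)) =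
          C2 * ((2 / (3 * Rn n ^ 2)) * (2 / (3 * Rn n ^ 2)) * (‖x‖ * ‖x‖)) * (‖v‖ * ‖w‖) := by
        ring
      rw [e3]
      have e4 : (2 / (3 * Rn n ^ 2)) * (2 / (3 * Rn n ^ 2)) * (‖x‖ * ‖x‖) ≤ 2 := by
        rw [div_mul_div_comm, div_mul_eq_mul_div, div_le_iff₀ (by positivity)]
        have hx2 : ‖x‖ * ‖x‖ ≤ (2 * Rn n) * (2 * Rn n) :=
          mul_le_mul h h (norm_nonneg x) (by positivity)
        have hR2 : 1 ≤ Rn n ^ 2 := by nlinarith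
        have key : 16 * Rn n ^ 2 ≤ 18 * Rn n ^ 2 * Rn n ^ 2 := by nlinarith
        nlinarith [hx2, key]
      have e5 : C2 * ((2 / (3 * Rn n ^ 2)) * (2 / (3 * Rn n ^ 2)) * (‖x‖ * ‖x‖)) ≤ C2 * 2 :=
        mul_le_mul_of_nonneg_left e4 hC2
      calc C2 * ((2 / (3 * Rn n ^ 2)) * (2 / (3 * Rn n ^ 2)) * (‖x‖ * ‖x‖)) * (‖v‖ * ‖w‖)
          ≤ C2 * 2 * (‖v‖ * ‖w‖) := mul_le_mul_of_nonneg_right e5 (by positivity)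
        _ = 2 * C2 * (‖v‖ * ‖w‖) := by ring
    · rw [kd_eq_zero_outer h.le]
      simp
      positivity
  calc |kc n x * ⟪v, w⟫ + ⟪x, v⟫ * (kd n x * ⟪x, w⟫)|
      ≤ |kc n x * ⟪v, w⟫| + |⟪x, v⟫ * (kd n x * ⟪x, w⟫)| := abs_add_le _ _
    _ ≤ C1 * (‖v‖ * ‖w‖) + 2 * C2 * (‖v‖ * ‖w‖) := add_le_add hterm1 hterm2
    _ = (C1 + 2 * C2) * (‖v‖ * ‖w‖) := by ring

end CancelAuxB
namespace CancelAuxB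
open Real MeasureTheory Filter Topology
open scoped RealInnerProductSpace

variable {N : ℕ}

lemma continuous_kc (n : ℕ) : Continuous (kc (N := N) n) := by
  apply Continuous.mul _ continuous_const
  exact (st'_contDiff (n := 0)).continuous.comp
    (continuous_const.sub (continuous_const.mul (continuous_norm.pow 2)))

lemma continuous_cutD (n : ℕ) (v : Spc N) : Continuous (cutD n v) :=
  (continuous_kc n).mul (continuous_id.inner continuous_const)

lemma contDiff_cutD (n : ℕ) (v : Spc N) {m : ℕ∞} : ContDiff ℝ m (cutD n v) := by
  apply ContDiff.mul
  · apply ContDiff.mul _ contDiff_const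
    apply (st'_contDiff (n := m)).comp
    exact contDiff_const.sub (contDiff_const.mul (contDiff_norm_sq (𝕜 := ℝ)))
  · exact ContDiff.inner ℝ contDiff_id contDiff_const

lemma continuous_fderiv_cut_apply (n : ℕ) (v : Spc N) :
    Continuous fun x : Spc N => fderiv ℝ (cut n) x v := by
  rw [cutD_eq]
  exact continuous_cutD n v

lemma continuous_fderiv_cutD (n : ℕ) (v w : Spc N) :
    Continuous fun x : Spc N => fderiv ℝ (cutD n v) x w := by
  have h : Continuous (fderiv ℝ (cutD n v)) :=
    (contDiff_cutD n v (m := 1)).continuous_fderiv (by simp)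
  exact ((ContinuousLinearMap.apply ℝ ℝ w).continuous.comp h)

/-- Eventually (in `n`), everything near a fixed point is deep inside the cutoff. -/
lemma eventually_ball_le (x : Spc N) :
    ∀ᶠ n in atTop, ∀ y ∈ Metric.ball x 1, ‖y‖ ≤ Rn n := by
  filter_upwards [eventually_ge_atTop ⌈‖x‖⌉₊] with n hn y hy
  have h1 : ‖y‖ ≤ ‖x‖ + 1 := by
    have := norm_sub_norm_le y x
    have h2 : dist y x < 1 := Metric.mem_ball.mp hy
    rw [dist_eq_norm] at h2
    linarith
  have h2 : (‖x‖ : ℝ) ≤ ⌈‖x‖⌉₊ := Nat.le_ceil _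
  have h3 : ((⌈‖x‖⌉₊ : ℕ) : ℝ) ≤ n := Nat.cast_le.mpr hn
  simp only [Rn]
  linarith

lemma tendsto_cut_one (x : Spc N) :
    Tendsto (fun n => cut n x) atTop (𝓝 1) := by
  apply Tendsto.congr' _ tendsto_const_nhds
  filter_upwards [eventually_ball_le x] with n hn
  exact (cut_eq_one (hn x (Metric.mem_ball_self one_pos))).symm

lemma tendsto_fderiv_cut (x v : Spc N) :
    Tendsto (fun n => fderiv ℝ (cut n) x v) atTop (𝓝 0) := by
  apply Tendsto.congr' _ tendsto_const_nhds
  filter_upwards [eventually_ball_le x] with n hn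
  rw [fderiv_cut_apply, kc_eq_zero_inner (hn x (Metric.mem_ball_self one_pos)), zero_mul]

lemma tendsto_fderiv_cutD (x v w : Spc N) :
    Tendsto (fun n => fderiv ℝ (cutD n v) x w) atTop (𝓝 0) := by
  apply Tendsto.congr' _ tendsto_const_nhds
  filter_upwards [eventually_ball_le x] with n hn
  have hz : ∀ y ∈ Metric.ball x 1, cutD n v y = 0 := by
    intro y hy
    rw [cutD, kc_eq_zero_inner (hn y hy), zero_mul]
  have hev : cutD n v =ᶠ[𝓝 x] fun _ => (0:ℝ) := by
    filter_upwards [Metric.ball_mem_nhds x one_pos] with y hy using hz y hy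
  rw [hev.fderiv_eq, fderiv_const_apply]
  simp

/-! ### Dominated convergence wrappers -/

/-- A "null multiplier family": continuous, uniformly bounded, pointwise to zero. -/
structure NullMult (N : ℕ) where
  m : ℕ → Spc N → ℝ
  cont : ∀ n, Continuous (m n)
  C : ℝ
  bdd : ∀ n x, |m n x| ≤ C
  tend : ∀ x, Tendsto (fun n => m n x) atTop (𝓝 0)

lemma NullMult.tendsto_integral {F : Spc N → ℝ} (hF : Integrable F volume)
    (M : NullMult N) :
    Tendsto (fun n => ∫ x : Spc N, F x * M.m n x) atTop (𝓝 0) := by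
  have h0 : (0 : ℝ) = ∫ _ : Spc N, (0:ℝ) := by simp
  rw [h0]
  apply MeasureTheory.tendsto_integral_of_dominated_convergence
    (bound := fun x => |F x| * M.C)
  · intro n
    exact hF.aestronglyMeasurable.mul (M.cont n).aestronglyMeasurable
  · exact hF.abs.mul_const _
  · intro n
    filter_upwards with x
    rw [norm_mul, Real.norm_eq_abs, Real.norm_eq_abs]
    exact mul_le_mul_of_nonneg_left (M.bdd n x) (abs_nonneg _)
  · filter_upwards with x
    simpa using tendsto_const_nhds.mul (M.tend x)

lemma tendsto_integral_cut {J : Spc N → ℝ} (hJ : Integrable J volume) :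
    Tendsto (fun n => ∫ x : Spc N, J x * cut n x) atTop (𝓝 (∫ x : Spc N, J x)) := by
  apply MeasureTheory.tendsto_integral_of_dominated_convergence (bound := fun x => |J x|)
  · intro n
    exact hJ.aestronglyMeasurable.mul ((contDiff_cut n (m := 0)).continuous).aestronglyMeasurable
  · exact hJ.abs
  · intro n
    filter_upwards with x
    rw [norm_mul, Real.norm_eq_abs, Real.norm_eq_abs]
    have h1 : |cut n x| ≤ 1 := by
      rw [abs_of_nonneg (cut_nonneg n x)]; exact cut_le_one n x
    simpa using mul_le_mul_of_nonneg_left h1 (abs_nonneg _)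
  · filter_upwards with x
    simpa using tendsto_const_nhds.mul (tendsto_cut_one x)

/-! ### Integration by parts with compact support -/

lemma integrable_of_cc {f : Spc N → ℝ} (hf : Continuous f) (h : HasCompactSupport f) :
    Integrable f volume :=
  hf.integrable_of_hasCompactSupport h

lemma ibp_compact {F G : Spc N → ℝ} (v : Spc N) (hF : ContDiff ℝ 1 F) (hG : ContDiff ℝ 1 G)
    (hsupp : HasCompactSupport G) :
    ∫ x : Spc N, fderiv ℝ F x v * G x = - ∫ x : Spc N, F x * fderiv ℝ G x v := by
  have hFc : Continuous F := hF.continuous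
  have hGc : Continuous G := hG.continuous
  have hFd : Continuous fun x : Spc N => fderiv ℝ F x v :=
    (ContinuousLinearMap.apply ℝ ℝ v).continuous.comp (hF.continuous_fderiv (by simp))
  have hGd : Continuous fun x : Spc N => fderiv ℝ G x v :=
    (ContinuousLinearMap.apply ℝ ℝ v).continuous.comp (hG.continuous_fderiv (by simp))
  have hI1 : Integrable (fun x : Spc N => fderiv ℝ F x v * G x) volume :=
    integrable_of_cc (hFd.mul hGc) (hsupp.mul_left)
  have hI2 : Integrable (fun x : Spc N => F x * fderiv ℝ G x v) volume :=
    integrable_of_cc (hFc.mul hGd) ((HasCompactSupport.fderiv_apply ℝ hsupp v).mul_left)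
  have hI3 : Integrable (fun x : Spc N => F x * G x) volume :=
    integrable_of_cc (hFc.mul hGc) (hsupp.mul_left)
  have h := integral_mul_fderiv_eq_neg_fderiv_mul_of_integrable hI1 hI2 hI3
    (fun x _ => hF.differentiable (by simp) x) (fun x _ => hG.differentiable (by simp) x)
  linarith [h]

end CancelAuxB
namespace CancelAuxB
open Real MeasureTheory Filter Topology
open scoped RealInnerProductSpace

variable {N : ℕ}

/-! ### Pointwise calculus helpers -/

lemma fd_mul {f g : Spc N → ℝ} {x : Spc N} (hf : DifferentiableAt ℝ f x)
    (hg : DifferentiableAt ℝ g x) (w : Spc N) :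
    fderiv ℝ (fun y => f y * g y) x w = fderiv ℝ f x w * g x + f x * fderiv ℝ g x w := by
  rw [fderiv_fun_mul hf hg]
  simp only [ContinuousLinearMap.add_apply, ContinuousLinearMap.smul_apply, smul_eq_mul]
  ring

lemma proj_eq (i : Fin N) :
    (fun y : Spc N => y i) = fun y => (EuclideanSpace.proj (𝕜 := ℝ) i) y := by
  funext y
  simp

lemma contDiff_proj (i : Fin N) {m : ℕ∞} : ContDiff ℝ m (fun y : Spc N => y i) := by
  rw [proj_eq i]
  exact (EuclideanSpace.proj (𝕜 := ℝ) i).contDiff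

lemma fderiv_proj (i : Fin N) (x w : Spc N) :
    fderiv ℝ (fun y : Spc N => y i) x w = w i := by
  rw [proj_eq i, ContinuousLinearMap.fderiv]
  simp

/-- Schwarz symmetry of second derivatives for `C²` functions. -/
lemma schwarz {ψ : Spc N → ℝ} (hψ : ContDiff ℝ 2 ψ) (x a b : Spc N) :
    fderiv ℝ (fun y => fderiv ℝ ψ y a) x b = fderiv ℝ (fun y => fderiv ℝ ψ y b) x a := by
  have hdiff : ∀ y, HasFDerivAt ψ (fderiv ℝ ψ y) y := fun y =>
    ((hψ.differentiable (by simp)) y).hasFDerivAt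
  have hf' : ContDiff ℝ 1 (fderiv ℝ ψ) := hψ.fderiv_right (le_refl _)
  have h2 : HasFDerivAt (fderiv ℝ ψ) (fderiv ℝ (fderiv ℝ ψ) x) x :=
    ((hf'.differentiable (by simp)) x).hasFDerivAt
  have hsym := second_derivative_symmetric hdiff h2 a b
  have e1 : fderiv ℝ (fun y => fderiv ℝ ψ y a) x =
      (ContinuousLinearMap.apply ℝ ℝ a).comp (fderiv ℝ (fderiv ℝ ψ) x) :=
    ((ContinuousLinearMap.apply ℝ ℝ a).hasFDerivAt.comp x h2).fderiv
  have e2 : fderiv ℝ (fun y => fderiv ℝ ψ y b) x =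
      (ContinuousLinearMap.apply ℝ ℝ b).comp (fderiv ℝ (fderiv ℝ ψ) x) :=
    ((ContinuousLinearMap.apply ℝ ℝ b).hasFDerivAt.comp x h2).fderiv
  rw [e1, e2]
  simpa using hsym.symm

/-! ### pd facts -/

lemma contDiff_pd {ψ : Spc N → ℝ} (hψ : ContDiff ℝ 2 ψ) (k : Fin N) :
    ContDiff ℝ 1 (DKG.pd k ψ) :=
  (ContinuousLinearMap.apply ℝ ℝ (EuclideanSpace.single k (1:ℝ))).contDiff.comp
    (hψ.fderiv_right (le_refl _))

lemma continuous_pd {ψ : Spc N → ℝ} (hψ : ContDiff ℝ 2 ψ) (k : Fin N) :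
    Continuous (DKG.pd k ψ) := (contDiff_pd hψ k).continuous

lemma memL2_pd {ψ : Spc N → ℝ} (hψ : ContDiff ℝ 2 ψ) (h : DKG.MemH1 ψ) (k : Fin N) :
    MemLp (DKG.pd k ψ) 2 (volume : Measure (Spc N)) := by
  apply MemLp.of_le h.2 (continuous_pd hψ k).aestronglyMeasurable
  filter_upwards with x
  have h1 : ‖fderiv ℝ ψ x (EuclideanSpace.single k (1:ℝ))‖ ≤
      ‖fderiv ℝ ψ x‖ * ‖EuclideanSpace.single k (1:ℝ)‖ :=
    (fderiv ℝ ψ x).le_opNorm _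
  rw [EuclideanSpace.norm_single] at h1
  simpa [DKG.pd] using h1

/-- Product of two continuous `L²` functions is integrable. -/
lemma integrable_mul_L2 {f g : Spc N → ℝ} (hf : MemLp f 2 (volume : Measure (Spc N)))
    (hg : MemLp g 2 (volume : Measure (Spc N)))
    (hfc : Continuous f) (hgc : Continuous g) :
    Integrable (fun x => f x * g x) volume := by
  apply Integrable.mono' (hf.integrable_sq.add hg.integrable_sq)
    ((hfc.mul hgc).aestronglyMeasurable)
  filter_upwards with x
  rw [Real.norm_eq_abs, Pi.mul_apply, abs_mul]
  simp only [Pi.add_apply]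
  nlinarith [sq_nonneg (|f x| - |g x|), sq_abs (f x), sq_abs (g x),
    abs_nonneg (f x), abs_nonneg (g x)]

/-! ### The triple integration-by-parts workhorse -/

lemma ibp_triple {F u χ : Spc N → ℝ} (w : Spc N) (hF : ContDiff ℝ 1 F)
    (hu : ContDiff ℝ 1 u) (hχ : ContDiff ℝ 1 χ) (hsupp : HasCompactSupport χ) :
    ∫ x : Spc N, fderiv ℝ F x w * (u x * χ x) =
      (-∫ x : Spc N, F x * fderiv ℝ u x w * χ x) -
        ∫ x : Spc N, F x * u x * fderiv ℝ χ x w := by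
  have hG : ContDiff ℝ 1 (fun y => u y * χ y) := hu.mul hχ
  have hGsupp : HasCompactSupport (fun y => u y * χ y) := hsupp.mul_left
  have h0 := ibp_compact w hF hG hGsupp
  have hrw : (fun x : Spc N => F x * fderiv ℝ (fun y => u y * χ y) x w) =
      fun x => F x * fderiv ℝ u x w * χ x + F x * u x * fderiv ℝ χ x w := by
    funext x
    rw [fd_mul ((hu.differentiable (by simp)) x) ((hχ.differentiable (by simp)) x)]
    ring
  rw [hrw] at h0
  have hI1 : Integrable (fun x : Spc N => F x * fderiv ℝ u x w * χ x) volume := by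
    apply integrable_of_cc
    · exact (hF.continuous.mul
        ((ContinuousLinearMap.apply ℝ ℝ w).continuous.comp
          (hu.continuous_fderiv (by simp)))).mul hχ.continuous
    · exact hsupp.mul_left
  have hI2 : Integrable (fun x : Spc N => F x * u x * fderiv ℝ χ x w) volume := by
    apply integrable_of_cc
    · exact (hF.continuous.mul hu.continuous).mul
        ((ContinuousLinearMap.apply ℝ ℝ w).continuous.comp (hχ.continuous_fderiv (by simp)))
    · exact (HasCompactSupport.fderiv_apply ℝ hsupp w).mul_left
  rw [integral_add hI1 hI2] at h0
  rw [h0]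
  ring

end CancelAuxB
namespace CancelAuxB
open Real MeasureTheory Filter Topology
open scoped RealInnerProductSpace

variable {N : ℕ} {p : ℝ} {q ψ₁ ψ₂ ψ : Spc N → ℝ}

/-- New-style dominated convergence lemma. -/
lemma tendsto_integral_mult {F : Spc N → ℝ} (hF : Integrable F volume)
    {m : ℕ → Spc N → ℝ} (hc : ∀ n, Continuous (m n)) {C : ℝ}
    (hb : ∀ n x, |m n x| ≤ C)
    (ht : ∀ x, Tendsto (fun n => m n x) atTop (𝓝 0)) :
    Tendsto (fun n => ∫ x : Spc N, F x * m n x) atTop (𝓝 0) := by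
  have h0 : (0 : ℝ) = ∫ _ : Spc N, (0:ℝ) := by simp
  rw [h0]
  apply MeasureTheory.tendsto_integral_of_dominated_convergence
    (bound := fun x => |F x| * C)
  · intro n
    exact hF.aestronglyMeasurable.mul (hc n).aestronglyMeasurable
  · exact hF.abs.mul_const _
  · intro n
    filter_upwards with x
    rw [norm_mul, Real.norm_eq_abs, Real.norm_eq_abs]
    exact mul_le_mul_of_nonneg_left (hb n x) (abs_nonneg _)
  · filter_upwards with x
    simpa using tendsto_const_nhds.mul (ht x)

lemma tendsto_integral_cutD {F : Spc N → ℝ} (hF : Integrable F volume) (v : Spc N) :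
    Tendsto (fun n => ∫ x : Spc N, F x * cutD n v x) atTop (𝓝 0) := by
  obtain ⟨C, hC0, hC⟩ := fderiv_cut_weight_bound (N := N)
  apply tendsto_integral_mult hF (fun n => continuous_cutD n v) (C := C * ‖v‖)
  · intro n x
    have h1 : |fderiv ℝ (cut n) x v| ≤ (1 + ‖x‖) * |fderiv ℝ (cut n) x v| := by
      nlinarith [abs_nonneg (fderiv ℝ (cut n) x v), norm_nonneg x]
    have h2 := hC n x v
    have h3 : cutD n v x = fderiv ℝ (cut n) x v := (fderiv_cut_apply n x v).symm
    rw [h3]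
    linarith
  · intro x
    have h := tendsto_fderiv_cut x v
    apply h.congr
    intro n
    exact fderiv_cut_apply n x v

lemma tendsto_integral_fcutD {F : Spc N → ℝ} (hF : Integrable F volume) (v w : Spc N) :
    Tendsto (fun n => ∫ x : Spc N, F x * fderiv ℝ (cutD n v) x w) atTop (𝓝 0) := by
  obtain ⟨C, hC0, hC⟩ := fderiv_cutD_bound (N := N)
  apply tendsto_integral_mult hF (fun n => continuous_fderiv_cutD n v w)
    (C := C * (‖v‖ * ‖w‖))
  · intro n x
    exact hC n x v w
  · intro x
    exact tendsto_fderiv_cutD x v w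

/-- The kernel equation turns `ψ - f'(q)ψ` into a sum of second derivatives. -/
lemma W_eq_lapsum (hker : ∀ y, DKG.applyL p q ψ y = 0) (x : Spc N) :
    ψ x - nl' p (q x) * ψ x =
      ∑ k : Fin N, fderiv ℝ (DKG.pd k ψ) x (EuclideanSpace.single k (1:ℝ)) := by
  have h : -(∑ k : Fin N, fderiv ℝ (DKG.pd k ψ) x (EuclideanSpace.single k (1:ℝ))) + ψ x -
      nl' p (q x) * ψ x = 0 := hker x
  linarith

lemma fderiv_hfun (hp : 2 < p) (hq : DKG.IsBoundState p q) (x w : Spc N) :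
    fderiv ℝ (fun y : Spc N => nl' p (q y)) x w = nl'' p (q x) * fderiv ℝ q x w := by
  have hd : HasFDerivAt q (fderiv ℝ q x) x :=
    ((hq.smooth.differentiable (by simp)) x).hasFDerivAt
  have h := (DKG.CancelAux.hasDerivAt_nl' hp (q x)).comp_hasFDerivAt x hd
  have h' : HasFDerivAt (fun y : Spc N => nl' p (q y)) (nl'' p (q x) • fderiv ℝ q x) x := h
  rw [h'.fderiv]
  simp

lemma hfun_contDiff (hp : 2 < p) (hq : DKG.IsBoundState p q) :
    ContDiff ℝ 1 (fun x : Spc N => nl' p (q x)) :=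
  (DKG.CancelAux.contDiff_one_nl' hp).comp (hq.smooth.of_le one_le_two)

/-- The master pointwise identity. -/
lemma keyPW (hp : 2 < p) (hq : DKG.IsBoundState p q)
    (hψ1C : ContDiff ℝ 2 ψ₁) (hψ2C : ContDiff ℝ 2 ψ₂) (x ω : Spc N) :
    nl'' p (q x) * ψ₁ x * ψ₂ x * fderiv ℝ q x ω =
      fderiv ℝ ψ₁ x ω * (ψ₂ x - nl' p (q x) * ψ₂ x) -
        fderiv ℝ (fun y => ψ₁ y - nl' p (q y) * ψ₁ y) x ω * ψ₂ x := by
  have hhd : DifferentiableAt ℝ (fun y : Spc N => nl' p (q y)) x :=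
    ((hfun_contDiff hp hq).differentiable (by simp)) x
  have hψ1d : DifferentiableAt ℝ ψ₁ x := (hψ1C.differentiable (by simp)) x
  have e1 : fderiv ℝ (fun y => ψ₁ y - nl' p (q y) * ψ₁ y) x ω =
      fderiv ℝ ψ₁ x ω -
        (fderiv ℝ (fun y : Spc N => nl' p (q y)) x ω * ψ₁ x +
          nl' p (q x) * fderiv ℝ ψ₁ x ω) := by
    rw [fderiv_fun_sub hψ1d (hhd.fun_mul hψ1d)]
    simp only [ContinuousLinearMap.sub_apply]
    rw [fd_mul hhd hψ1d]
  rw [e1, fderiv_hfun hp hq]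
  ring

end CancelAuxB
namespace CancelAuxB
open Real MeasureTheory Filter Topology
open scoped RealInnerProductSpace

variable {N : ℕ} {p : ℝ} {q ψ₁ ψ₂ ψ : Spc N → ℝ}

lemma icongr {f g : Spc N → ℝ} (h : ∀ x, f x = g x) :
    (∫ x : Spc N, f x) = ∫ x : Spc N, g x := by
  have : f = g := funext h
  rw [this]

lemma hasCompactSupport_cutD (n : ℕ) (v : Spc N) : HasCompactSupport (cutD n v) := by
  rw [← cutD_eq]
  exact HasCompactSupport.fderiv_apply ℝ (hasCompactSupport_cut n) v

lemma int_cc_cut {f : Spc N → ℝ} (hf : Continuous f) (n : ℕ) :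
    Integrable (fun x => f x * cut n x) volume :=
  integrable_of_cc (hf.mul (contDiff_cut n (m := 0)).continuous)
    ((hasCompactSupport_cut n).mul_left)

lemma int_cc_cutD {f : Spc N → ℝ} (hf : Continuous f) (n : ℕ) (v : Spc N) :
    Integrable (fun x => f x * cutD n v x) volume :=
  integrable_of_cc (hf.mul (continuous_cutD n v)) ((hasCompactSupport_cutD n v).mul_left)

lemma int_cc_fcutD {f : Spc N → ℝ} (hf : Continuous f) (n : ℕ) (v w : Spc N) :
    Integrable (fun x => f x * fderiv ℝ (cutD n v) x w) volume :=
  integrable_of_cc (hf.mul (continuous_fderiv_cutD n v w))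
    ((HasCompactSupport.fderiv_apply ℝ (hasCompactSupport_cutD n v) w).mul_left)

/-- Per-index IBP step with the plain cutoff: moves one derivative off a second
derivative and onto the cutoff, using Schwarz symmetry. -/
lemma per_k_step (hφC : ContDiff ℝ 2 ψ) {u : Spc N → ℝ} (hu : ContDiff ℝ 1 u)
    (n : ℕ) (k : Fin N) :
    ∫ x : Spc N, fderiv ℝ (DKG.pd k ψ) x (EuclideanSpace.single k (1:ℝ)) * (u x * cut n x) =
      (-∫ x : Spc N, DKG.pd k ψ x * fderiv ℝ u x (EuclideanSpace.single k (1:ℝ)) * cut n x) -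
        ∫ x : Spc N, DKG.pd k ψ x * u x * cutD n (EuclideanSpace.single k (1:ℝ)) x := by
  have h := ibp_triple (EuclideanSpace.single k (1:ℝ)) (contDiff_pd hφC k) hu
    (contDiff_cut n) (hasCompactSupport_cut n)
  rw [h]
  congr 1
  apply icongr
  intro x
  rw [fderiv_cut_apply]
  rfl

/-- Per-index IBP step with the derived cutoff `cutD`. -/
lemma per_k_stepD (hφC : ContDiff ℝ 2 ψ) {u : Spc N → ℝ} (hu : ContDiff ℝ 1 u)
    (n : ℕ) (k : Fin N) (v : Spc N) :
    ∫ x : Spc N, fderiv ℝ (DKG.pd k ψ) x (EuclideanSpace.single k (1:ℝ)) * (u x * cutD n v x) =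
      (-∫ x : Spc N, DKG.pd k ψ x * fderiv ℝ u x (EuclideanSpace.single k (1:ℝ)) * cutD n v x) -
        ∫ x : Spc N, DKG.pd k ψ x * u x *
          fderiv ℝ (cutD n v) x (EuclideanSpace.single k (1:ℝ)) :=
  ibp_triple (EuclideanSpace.single k (1:ℝ)) (contDiff_pd hφC k) hu
    (contDiff_cutD n v) (hasCompactSupport_cutD n v)

end CancelAuxB
namespace CancelAuxB
open Real MeasureTheory Filter Topology
open scoped RealInnerProductSpace

variable {N : ℕ} {p : ℝ} {q ψ₁ ψ₂ : Spc N → ℝ}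

lemma gen_translation (hp : 2 < p) (hq : DKG.IsBoundState p q)
    (h1 : DKG.InKerL p q ψ₁) (h2 : DKG.InKerL p q ψ₂) (m : Fin N) :
    Tendsto (fun n => ∫ x : Spc N,
      nl'' p (q x) * ψ₁ x * ψ₂ x * DKG.pd m q x * cut n x) atTop (𝓝 0) := by
  obtain ⟨hψ1C, hψ1H, hker1⟩ := h1
  obtain ⟨hψ2C, hψ2H, hker2⟩ := h2
  have hψ1C1 : ContDiff ℝ 1 ψ₁ := hψ1C.of_le one_le_two
  have hψ2C1 : ContDiff ℝ 1 ψ₂ := hψ2C.of_le one_le_two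
  have hh : ContDiff ℝ 1 (fun x : Spc N => nl' p (q x)) := hfun_contDiff hp hq
  have hW1C : ContDiff ℝ 1 (fun x : Spc N => ψ₁ x - nl' p (q x) * ψ₁ x) :=
    hψ1C1.sub (hh.mul hψ1C1)
  -- continuity bank
  have cpd1 : ∀ k, Continuous (DKG.pd k ψ₁) := continuous_pd hψ1C
  have cpd2 : ∀ k, Continuous (DKG.pd k ψ₂) := continuous_pd hψ2C
  have cfd1 : ∀ (k : Fin N) (w : Spc N), Continuous fun x => fderiv ℝ (DKG.pd k ψ₁) x w :=
    fun k w => (ContinuousLinearMap.apply ℝ ℝ w).continuous.comp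
      ((contDiff_pd hψ1C k).continuous_fderiv (by simp))
  have cfd2 : ∀ (k : Fin N) (w : Spc N), Continuous fun x => fderiv ℝ (DKG.pd k ψ₂) x w :=
    fun k w => (ContinuousLinearMap.apply ℝ ℝ w).continuous.comp
      ((contDiff_pd hψ2C k).continuous_fderiv (by simp))
  have cW1 : Continuous (fun x : Spc N => ψ₁ x - nl' p (q x) * ψ₁ x) := hW1C.continuous
  have cfW1 : ∀ w : Spc N, Continuous fun x => fderiv ℝ
      (fun y => ψ₁ y - nl' p (q y) * ψ₁ y) x w :=
    fun w => (ContinuousLinearMap.apply ℝ ℝ w).continuous.comp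
      (hW1C.continuous_fderiv (by simp))
  -- L¹ bank
  have hL2pd1 : ∀ k, MemLp (DKG.pd k ψ₁) 2 (volume : Measure (Spc N)) := memL2_pd hψ1C hψ1H
  have hL2pd2 : ∀ k, MemLp (DKG.pd k ψ₂) 2 (volume : Measure (Spc N)) := memL2_pd hψ2C hψ2H
  have hInt12 : ∀ k j : Fin N, Integrable (fun x => DKG.pd k ψ₁ x * DKG.pd j ψ₂ x) volume :=
    fun k j => integrable_mul_L2 (hL2pd1 k) (hL2pd2 j) (cpd1 k) (cpd2 j)
  have hInt21 : ∀ k j : Fin N, Integrable (fun x => DKG.pd k ψ₂ x * DKG.pd j ψ₁ x) volume :=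
    fun k j => integrable_mul_L2 (hL2pd2 k) (hL2pd1 j) (cpd2 k) (cpd1 j)
  have hInt1ψ2 : ∀ k : Fin N, Integrable (fun x => DKG.pd k ψ₁ x * ψ₂ x) volume :=
    fun k => integrable_mul_L2 (hL2pd1 k) hψ2H.1 (cpd1 k) hψ2C1.continuous
  -- the key identity for each n
  have keyeq : ∀ n : ℕ, (∫ x : Spc N, nl'' p (q x) * ψ₁ x * ψ₂ x * DKG.pd m q x * cut n x)
      = ∑ k : Fin N,
        ((∫ x : Spc N, DKG.pd k ψ₁ x * DKG.pd k ψ₂ x *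
            cutD n (EuclideanSpace.single m (1:ℝ)) x)
          - (∫ x : Spc N, DKG.pd k ψ₂ x * DKG.pd m ψ₁ x *
              cutD n (EuclideanSpace.single k (1:ℝ)) x)
          - (∫ x : Spc N, DKG.pd k ψ₁ x * DKG.pd m ψ₂ x *
              cutD n (EuclideanSpace.single k (1:ℝ)) x)
          - (∫ x : Spc N, DKG.pd k ψ₁ x * DKG.pd k ψ₂ x *
              cutD n (EuclideanSpace.single m (1:ℝ)) x)
          - (∫ x : Spc N, DKG.pd k ψ₁ x * ψ₂ x *
              fderiv ℝ (cutD n (EuclideanSpace.single m (1:ℝ))) x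
                (EuclideanSpace.single k (1:ℝ)))) := by
    intro n
    -- integrability of the two pieces of the first split
    have hIp1 : Integrable (fun x : Spc N =>
        (DKG.pd m ψ₁ x * (ψ₂ x - nl' p (q x) * ψ₂ x)) * cut n x) volume := by
      apply int_cc_cut
      exact (cpd1 m).mul (hψ2C1.continuous.sub (hh.continuous.mul hψ2C1.continuous))
    have hIp2 : Integrable (fun x : Spc N =>
        fderiv ℝ (fun y => ψ₁ y - nl' p (q y) * ψ₁ y) x (EuclideanSpace.single m (1:ℝ)) *
          (ψ₂ x * cut n x)) volume := by
      apply integrable_of_cc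
      · exact (cfW1 _).mul (hψ2C1.continuous.mul (contDiff_cut n (m := 0)).continuous)
      · exact ((hasCompactSupport_cut n).mul_left).mul_left
    -- Step 1 : pointwise key identity and split
    have step1 : (∫ x : Spc N, nl'' p (q x) * ψ₁ x * ψ₂ x * DKG.pd m q x * cut n x)
        = (∫ x : Spc N, (DKG.pd m ψ₁ x * (ψ₂ x - nl' p (q x) * ψ₂ x)) * cut n x)
          - ∫ x : Spc N, fderiv ℝ (fun y => ψ₁ y - nl' p (q y) * ψ₁ y) x
              (EuclideanSpace.single m (1:ℝ)) * (ψ₂ x * cut n x) := by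
      rw [← integral_sub hIp1 hIp2]
      apply icongr
      intro x
      have hk := keyPW hp hq hψ1C hψ2C x (EuclideanSpace.single m (1:ℝ))
      have hpd : DKG.pd m q x = fderiv ℝ q x (EuclideanSpace.single m (1:ℝ)) := rfl
      have hpd1 : DKG.pd m ψ₁ x = fderiv ℝ ψ₁ x (EuclideanSpace.single m (1:ℝ)) := rfl
      rw [hpd, hpd1]
      linear_combination (cut n x) * hk
    -- Step 2 : expand the first piece over the Laplacian sum of ψ₂
    have hIA : ∀ k : Fin N, Integrable (fun x : Spc N =>
        fderiv ℝ (DKG.pd k ψ₂) x (EuclideanSpace.single k (1:ℝ)) *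
          (DKG.pd m ψ₁ x * cut n x)) volume := by
      intro k
      apply integrable_of_cc
      · exact (cfd2 k _).mul ((cpd1 m).mul (contDiff_cut n (m := 0)).continuous)
      · exact ((hasCompactSupport_cut n).mul_left).mul_left
    have step2 : (∫ x : Spc N, (DKG.pd m ψ₁ x * (ψ₂ x - nl' p (q x) * ψ₂ x)) * cut n x)
        = ∑ k : Fin N, ∫ x : Spc N,
            fderiv ℝ (DKG.pd k ψ₂) x (EuclideanSpace.single k (1:ℝ)) *
              (DKG.pd m ψ₁ x * cut n x) := by
      rw [← integral_finset_sum _ (fun k _ => hIA k)]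
      apply icongr
      intro x
      rw [W_eq_lapsum hker2 x, Finset.mul_sum, Finset.sum_mul]
      exact Finset.sum_congr rfl fun k _ => by ring
    -- Step 3 : IBP on the W₁ piece
    have step3 : (∫ x : Spc N, fderiv ℝ (fun y => ψ₁ y - nl' p (q y) * ψ₁ y) x
          (EuclideanSpace.single m (1:ℝ)) * (ψ₂ x * cut n x))
        = (-∫ x : Spc N, (ψ₁ x - nl' p (q x) * ψ₁ x) * DKG.pd m ψ₂ x * cut n x)
          - ∫ x : Spc N, (ψ₁ x - nl' p (q x) * ψ₁ x) * ψ₂ x *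
              cutD n (EuclideanSpace.single m (1:ℝ)) x := by
      have h := ibp_triple (EuclideanSpace.single m (1:ℝ)) hW1C hψ2C1
        (contDiff_cut n) (hasCompactSupport_cut n)
      rw [h]
      congr 1
      apply icongr
      intro x
      rw [fderiv_cut_apply]
      rfl
    -- Step 4 : expand the two W₁ integrals over the Laplacian sum of ψ₁
    have hIC : ∀ k : Fin N, Integrable (fun x : Spc N =>
        fderiv ℝ (DKG.pd k ψ₁) x (EuclideanSpace.single k (1:ℝ)) *
          (DKG.pd m ψ₂ x * cut n x)) volume := by
      intro k
      apply integrable_of_cc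
      · exact (cfd1 k _).mul ((cpd2 m).mul (contDiff_cut n (m := 0)).continuous)
      · exact ((hasCompactSupport_cut n).mul_left).mul_left
    have step4 : (∫ x : Spc N, (ψ₁ x - nl' p (q x) * ψ₁ x) * DKG.pd m ψ₂ x * cut n x)
        = ∑ k : Fin N, ∫ x : Spc N,
            fderiv ℝ (DKG.pd k ψ₁) x (EuclideanSpace.single k (1:ℝ)) *
              (DKG.pd m ψ₂ x * cut n x) := by
      rw [← integral_finset_sum _ (fun k _ => hIC k)]
      apply icongr
      intro x
      rw [W_eq_lapsum hker1 x, Finset.sum_mul, Finset.sum_mul]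
      exact Finset.sum_congr rfl fun k _ => by ring
    have hID : ∀ k : Fin N, Integrable (fun x : Spc N =>
        fderiv ℝ (DKG.pd k ψ₁) x (EuclideanSpace.single k (1:ℝ)) *
          (ψ₂ x * cutD n (EuclideanSpace.single m (1:ℝ)) x)) volume := by
      intro k
      apply integrable_of_cc
      · exact (cfd1 k _).mul (hψ2C1.continuous.mul (continuous_cutD n _))
      · exact ((hasCompactSupport_cutD n _).mul_left).mul_left
    have step5 : (∫ x : Spc N, (ψ₁ x - nl' p (q x) * ψ₁ x) * ψ₂ x *
          cutD n (EuclideanSpace.single m (1:ℝ)) x)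
        = ∑ k : Fin N, ∫ x : Spc N,
            fderiv ℝ (DKG.pd k ψ₁) x (EuclideanSpace.single k (1:ℝ)) *
              (ψ₂ x * cutD n (EuclideanSpace.single m (1:ℝ)) x) := by
      rw [← integral_finset_sum _ (fun k _ => hID k)]
      apply icongr
      intro x
      rw [W_eq_lapsum hker1 x, Finset.sum_mul, Finset.sum_mul]
      exact Finset.sum_congr rfl fun k _ => by ring
    -- assemble and do the per-k work
    rw [step1, step2, step3, step4, step5]
    have habc : ∀ a b c : ℝ, a - (-b - c) = a + (b + c) := fun a b c => by ring
    rw [habc, ← Finset.sum_add_distrib, ← Finset.sum_add_distrib]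
    apply Finset.sum_congr rfl
    intro k _
    rw [per_k_step hψ2C (contDiff_pd hψ1C m) n k,
      per_k_step hψ1C (contDiff_pd hψ2C m) n k,
      per_k_stepD hψ1C hψ2C1 n k]
    have s1 : (∫ x : Spc N, DKG.pd k ψ₂ x *
          fderiv ℝ (DKG.pd m ψ₁) x (EuclideanSpace.single k (1:ℝ)) * cut n x)
        = ∫ x : Spc N, DKG.pd k ψ₂ x *
            fderiv ℝ (DKG.pd k ψ₁) x (EuclideanSpace.single m (1:ℝ)) * cut n x := by
      apply icongr
      intro x
      rw [show fderiv ℝ (DKG.pd m ψ₁) x (EuclideanSpace.single k (1:ℝ)) =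
        fderiv ℝ (DKG.pd k ψ₁) x (EuclideanSpace.single m (1:ℝ)) from
          schwarz hψ1C x (EuclideanSpace.single m (1:ℝ)) (EuclideanSpace.single k (1:ℝ))]
    have s2 : (∫ x : Spc N, DKG.pd k ψ₁ x *
          fderiv ℝ (DKG.pd m ψ₂) x (EuclideanSpace.single k (1:ℝ)) * cut n x)
        = ∫ x : Spc N, DKG.pd k ψ₁ x *
            fderiv ℝ (DKG.pd k ψ₂) x (EuclideanSpace.single m (1:ℝ)) * cut n x := by
      apply icongr
      intro x
      rw [show fderiv ℝ (DKG.pd m ψ₂) x (EuclideanSpace.single k (1:ℝ)) =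
        fderiv ℝ (DKG.pd k ψ₂) x (EuclideanSpace.single m (1:ℝ)) from
          schwarz hψ2C x (EuclideanSpace.single m (1:ℝ)) (EuclideanSpace.single k (1:ℝ))]
    have s3 : (∫ x : Spc N, DKG.pd k ψ₁ x * fderiv ℝ ψ₂ x (EuclideanSpace.single k (1:ℝ)) *
          cutD n (EuclideanSpace.single m (1:ℝ)) x)
        = ∫ x : Spc N, DKG.pd k ψ₁ x * DKG.pd k ψ₂ x *
            cutD n (EuclideanSpace.single m (1:ℝ)) x :=
      icongr fun x => rfl
    have i1 : Integrable (fun x : Spc N => DKG.pd k ψ₂ x *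
        fderiv ℝ (DKG.pd k ψ₁) x (EuclideanSpace.single m (1:ℝ)) * cut n x) volume :=
      int_cc_cut ((cpd2 k).mul (cfd1 k _)) n
    have i2 : Integrable (fun x : Spc N => DKG.pd k ψ₁ x *
        fderiv ℝ (DKG.pd k ψ₂) x (EuclideanSpace.single m (1:ℝ)) * cut n x) volume :=
      int_cc_cut ((cpd1 k).mul (cfd2 k _)) n
    have hg : (∫ x : Spc N, DKG.pd k ψ₂ x *
          fderiv ℝ (DKG.pd k ψ₁) x (EuclideanSpace.single m (1:ℝ)) * cut n x)
        + (∫ x : Spc N, DKG.pd k ψ₁ x *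
            fderiv ℝ (DKG.pd k ψ₂) x (EuclideanSpace.single m (1:ℝ)) * cut n x)
        = -∫ x : Spc N, DKG.pd k ψ₁ x * DKG.pd k ψ₂ x *
            cutD n (EuclideanSpace.single m (1:ℝ)) x := by
      rw [← integral_add i1 i2]
      have hGkC : ContDiff ℝ 1 (fun y : Spc N => DKG.pd k ψ₁ y * DKG.pd k ψ₂ y) :=
        (contDiff_pd hψ1C k).mul (contDiff_pd hψ2C k)
      have hibp := ibp_compact (EuclideanSpace.single m (1:ℝ)) hGkC
        (contDiff_cut n) (hasCompactSupport_cut n)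
      calc (∫ x : Spc N, (DKG.pd k ψ₂ x *
            fderiv ℝ (DKG.pd k ψ₁) x (EuclideanSpace.single m (1:ℝ)) * cut n x
            + DKG.pd k ψ₁ x *
              fderiv ℝ (DKG.pd k ψ₂) x (EuclideanSpace.single m (1:ℝ)) * cut n x))
          = ∫ x : Spc N, fderiv ℝ (fun y : Spc N => DKG.pd k ψ₁ y * DKG.pd k ψ₂ y) x
              (EuclideanSpace.single m (1:ℝ)) * cut n x := by
            apply icongr
            intro x
            rw [fd_mul (((contDiff_pd hψ1C k).differentiable (by simp)) x)
              (((contDiff_pd hψ2C k).differentiable (by simp)) x)]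
            ring
        _ = -∫ x : Spc N, (fun y : Spc N => DKG.pd k ψ₁ y * DKG.pd k ψ₂ y) x *
              fderiv ℝ (cut n) x (EuclideanSpace.single m (1:ℝ)) := hibp
        _ = -∫ x : Spc N, DKG.pd k ψ₁ x * DKG.pd k ψ₂ x *
              cutD n (EuclideanSpace.single m (1:ℝ)) x := by
            congr 1
            apply icongr
            intro x
            rw [fderiv_cut_apply]
            show DKG.pd k ψ₁ x * DKG.pd k ψ₂ x * (kc n x * ⟪x, _⟫) = _
            rfl
    linarith [s1, s2, s3, hg]
  -- final limit computation
  have hrw : (fun n => ∫ x : Spc N, nl'' p (q x) * ψ₁ x * ψ₂ x * DKG.pd m q x * cut n x)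
      = fun n => ∑ k : Fin N,
        ((∫ x : Spc N, DKG.pd k ψ₁ x * DKG.pd k ψ₂ x *
            cutD n (EuclideanSpace.single m (1:ℝ)) x)
          - (∫ x : Spc N, DKG.pd k ψ₂ x * DKG.pd m ψ₁ x *
              cutD n (EuclideanSpace.single k (1:ℝ)) x)
          - (∫ x : Spc N, DKG.pd k ψ₁ x * DKG.pd m ψ₂ x *
              cutD n (EuclideanSpace.single k (1:ℝ)) x)
          - (∫ x : Spc N, DKG.pd k ψ₁ x * DKG.pd k ψ₂ x *
              cutD n (EuclideanSpace.single m (1:ℝ)) x)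
          - (∫ x : Spc N, DKG.pd k ψ₁ x * ψ₂ x *
              fderiv ℝ (cutD n (EuclideanSpace.single m (1:ℝ))) x
                (EuclideanSpace.single k (1:ℝ)))) := funext keyeq
  rw [hrw]
  have hk : ∀ k : Fin N, Tendsto (fun n =>
      (∫ x : Spc N, DKG.pd k ψ₁ x * DKG.pd k ψ₂ x *
          cutD n (EuclideanSpace.single m (1:ℝ)) x)
        - (∫ x : Spc N, DKG.pd k ψ₂ x * DKG.pd m ψ₁ x *
            cutD n (EuclideanSpace.single k (1:ℝ)) x)
        - (∫ x : Spc N, DKG.pd k ψ₁ x * DKG.pd m ψ₂ x *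
            cutD n (EuclideanSpace.single k (1:ℝ)) x)
        - (∫ x : Spc N, DKG.pd k ψ₁ x * DKG.pd k ψ₂ x *
            cutD n (EuclideanSpace.single m (1:ℝ)) x)
        - (∫ x : Spc N, DKG.pd k ψ₁ x * ψ₂ x *
            fderiv ℝ (cutD n (EuclideanSpace.single m (1:ℝ))) x
              (EuclideanSpace.single k (1:ℝ)))) atTop (𝓝 0) := by
    intro k
    have t1 := tendsto_integral_cutD (hInt12 k k) (EuclideanSpace.single m (1:ℝ))
    have t2 := tendsto_integral_cutD (hInt21 k m) (EuclideanSpace.single k (1:ℝ))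
    have t3 := tendsto_integral_cutD (hInt12 k m) (EuclideanSpace.single k (1:ℝ))
    have t4 := tendsto_integral_cutD (hInt12 k k) (EuclideanSpace.single m (1:ℝ))
    have t5 := tendsto_integral_fcutD (hInt1ψ2 k) (EuclideanSpace.single m (1:ℝ))
      (EuclideanSpace.single k (1:ℝ))
    have := (((t1.sub t2).sub t3).sub t4).sub t5
    simpa using this
  have := tendsto_finset_sum (Finset.univ : Finset (Fin N)) (fun k _ => hk k)
  simpa using this
end CancelAuxB
namespace CancelAuxB
open Real MeasureTheory Filter Topology
open scoped RealInnerProductSpace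

variable {N : ℕ} {p : ℝ} {q ψ₁ ψ₂ : Spc N → ℝ}

lemma inner_single_coord (x : Spc N) (j : Fin N) :
    (⟪x, EuclideanSpace.single j (1:ℝ)⟫ : ℝ) = x j := by
  simp [EuclideanSpace.inner_single_right]

lemma abs_coord_le (x : Spc N) (i : Fin N) : |x i| ≤ ‖x‖ := by
  have h := abs_real_inner_le_norm x (EuclideanSpace.single i (1:ℝ))
  rw [EuclideanSpace.norm_single, inner_single_coord] at h
  simpa using h

lemma cutD_self_eq (n : ℕ) (v x : Spc N) : cutD n v x = fderiv ℝ (cut n) x v :=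
  (fderiv_cut_apply n x v).symm

/-- Weighted multiplier convergence: `x i * ∂ᵥχₙ` against an `L¹` function. -/
lemma tendsto_integral_proj_cutD {F : Spc N → ℝ} (hF : Integrable F volume)
    (i : Fin N) (v : Spc N) :
    Tendsto (fun n => ∫ x : Spc N, F x * (x i * cutD n v x)) atTop (𝓝 0) := by
  obtain ⟨C, hC0, hC⟩ := fderiv_cut_weight_bound (N := N)
  apply tendsto_integral_mult hF
    (fun n => (contDiff_proj i (m := 0)).continuous.mul (continuous_cutD n v))
    (C := C * ‖v‖)
  · intro n x
    rw [Pi.mul_apply, abs_mul, cutD_self_eq]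
    have h1 : |x i| * |fderiv ℝ (cut n) x v| ≤ (1 + ‖x‖) * |fderiv ℝ (cut n) x v| := by
      apply mul_le_mul_of_nonneg_right _ (abs_nonneg _)
      have := abs_coord_le x i
      linarith [norm_nonneg x]
    exact le_trans h1 (hC n x v)
  · intro x
    have h := (tendsto_fderiv_cut x v).const_mul (x i)
    rw [mul_zero] at h
    apply h.congr
    intro n
    rw [Pi.mul_apply, cutD_self_eq]

end CancelAuxB
namespace CancelAuxB
open Real MeasureTheory Filter Topology
open scoped RealInnerProductSpace

variable {N : ℕ} {p : ℝ} {q ψ₁ ψ₂ : Spc N → ℝ} {φ ψ : Spc N → ℝ}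

lemma fderiv_pd_proj {φ : Spc N → ℝ} (hφC : ContDiff ℝ 2 φ) (b a k : Fin N) (x : Spc N) :
    fderiv ℝ (fun y : Spc N => DKG.pd b φ y * y a) x (EuclideanSpace.single k (1:ℝ)) =
      fderiv ℝ (DKG.pd k φ) x (EuclideanSpace.single b (1:ℝ)) * x a +
        DKG.pd b φ x * (if a = k then (1:ℝ) else 0) := by
  rw [fd_mul (((contDiff_pd hφC b).differentiable (by simp)) x)
    (((contDiff_proj a (m := 1)).differentiable (by simp)) x)]
  rw [fderiv_proj, EuclideanSpace.single_apply]
  congr 2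
  exact schwarz hφC x (EuclideanSpace.single b (1:ℝ)) (EuclideanSpace.single k (1:ℝ))

/-- Per-`k` IBP step with a coordinate-weighted companion. -/
lemma rot_per_k (hψC : ContDiff ℝ 2 ψ) (hφC : ContDiff ℝ 2 φ) (b a k : Fin N) (n : ℕ) :
    ∫ x : Spc N, fderiv ℝ (DKG.pd k ψ) x (EuclideanSpace.single k (1:ℝ)) *
        (DKG.pd b φ x * x a * cut n x) =
      (-∫ x : Spc N, DKG.pd k ψ x *
          (fderiv ℝ (DKG.pd k φ) x (EuclideanSpace.single b (1:ℝ)) * x a) * cut n x)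
        - ((if a = k then (1:ℝ) else 0) *
            ∫ x : Spc N, DKG.pd k ψ x * DKG.pd b φ x * cut n x)
        - ∫ x : Spc N, DKG.pd k ψ x * (DKG.pd b φ x * x a) *
            cutD n (EuclideanSpace.single k (1:ℝ)) x := by
  have hu : ContDiff ℝ 1 (fun y : Spc N => DKG.pd b φ y * y a) :=
    (contDiff_pd hφC b).mul (contDiff_proj a)
  have h := per_k_step (ψ := ψ) hψC hu n k
  beta_reduce at h
  rw [h]
  have int1 : Integrable (fun x : Spc N => DKG.pd k ψ x *
      (fderiv ℝ (DKG.pd k φ) x (EuclideanSpace.single b (1:ℝ)) * x a) * cut n x) volume := by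
    apply int_cc_cut
    exact (continuous_pd hψC k).mul
      ((((ContinuousLinearMap.apply ℝ ℝ (EuclideanSpace.single b (1:ℝ))).continuous.comp
        ((contDiff_pd hφC k).continuous_fderiv (by simp)))).mul
        (contDiff_proj a (m := 0)).continuous)
  have int2 : Integrable (fun x : Spc N => (if a = k then (1:ℝ) else 0) *
      (DKG.pd k ψ x * DKG.pd b φ x * cut n x)) volume := by
    apply Integrable.const_mul
    exact int_cc_cut ((continuous_pd hψC k).mul (continuous_pd hφC b)) n
  have hmid : (∫ x : Spc N, DKG.pd k ψ x *
        fderiv ℝ (fun y : Spc N => DKG.pd b φ y * y a) x (EuclideanSpace.single k (1:ℝ)) *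
          cut n x)
      = (∫ x : Spc N, DKG.pd k ψ x *
          (fderiv ℝ (DKG.pd k φ) x (EuclideanSpace.single b (1:ℝ)) * x a) * cut n x)
        + ((if a = k then (1:ℝ) else 0) *
            ∫ x : Spc N, DKG.pd k ψ x * DKG.pd b φ x * cut n x) := by
    rw [← integral_const_mul, ← integral_add int1 int2]
    apply icongr
    intro x
    rw [fderiv_pd_proj hφC b a k x]
    ring
  rw [hmid]
  ring

/-- Cross-term recombination: the symmetric second-order pieces give a weighted
boundary term. -/
lemma rot_cross (hψ1C : ContDiff ℝ 2 ψ₁) (hψ2C : ContDiff ℝ 2 ψ₂)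
    {a b : Fin N} (hab : a ≠ b) (k : Fin N) (n : ℕ) :
    (∫ x : Spc N, DKG.pd k ψ₂ x *
        (fderiv ℝ (DKG.pd k ψ₁) x (EuclideanSpace.single b (1:ℝ)) * x a) * cut n x)
      + (∫ x : Spc N, DKG.pd k ψ₁ x *
          (fderiv ℝ (DKG.pd k ψ₂) x (EuclideanSpace.single b (1:ℝ)) * x a) * cut n x)
      = -∫ x : Spc N, DKG.pd k ψ₁ x * DKG.pd k ψ₂ x *
          (x a * cutD n (EuclideanSpace.single b (1:ℝ)) x) := by
  have cfd1 : Continuous fun x : Spc N =>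
      fderiv ℝ (DKG.pd k ψ₁) x (EuclideanSpace.single b (1:ℝ)) :=
    (ContinuousLinearMap.apply ℝ ℝ _).continuous.comp
      ((contDiff_pd hψ1C k).continuous_fderiv (by simp))
  have cfd2 : Continuous fun x : Spc N =>
      fderiv ℝ (DKG.pd k ψ₂) x (EuclideanSpace.single b (1:ℝ)) :=
    (ContinuousLinearMap.apply ℝ ℝ _).continuous.comp
      ((contDiff_pd hψ2C k).continuous_fderiv (by simp))
  have i1 : Integrable (fun x : Spc N => DKG.pd k ψ₂ x *
      (fderiv ℝ (DKG.pd k ψ₁) x (EuclideanSpace.single b (1:ℝ)) * x a) * cut n x) volume :=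
    int_cc_cut ((continuous_pd hψ2C k).mul
      (cfd1.mul (contDiff_proj a (m := 0)).continuous)) n
  have i2 : Integrable (fun x : Spc N => DKG.pd k ψ₁ x *
      (fderiv ℝ (DKG.pd k ψ₂) x (EuclideanSpace.single b (1:ℝ)) * x a) * cut n x) volume :=
    int_cc_cut ((continuous_pd hψ1C k).mul
      (cfd2.mul (contDiff_proj a (m := 0)).continuous)) n
  rw [← integral_add i1 i2]
  have hGkC : ContDiff ℝ 1 (fun y : Spc N => DKG.pd k ψ₁ y * DKG.pd k ψ₂ y) :=
    (contDiff_pd hψ1C k).mul (contDiff_pd hψ2C k)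
  have h := ibp_triple (EuclideanSpace.single b (1:ℝ)) hGkC (contDiff_proj a)
    (contDiff_cut n) (hasCompactSupport_cut n)
  beta_reduce at h
  calc (∫ x : Spc N, (DKG.pd k ψ₂ x *
        (fderiv ℝ (DKG.pd k ψ₁) x (EuclideanSpace.single b (1:ℝ)) * x a) * cut n x
        + DKG.pd k ψ₁ x *
          (fderiv ℝ (DKG.pd k ψ₂) x (EuclideanSpace.single b (1:ℝ)) * x a) * cut n x))
      = ∫ x : Spc N, fderiv ℝ (fun y : Spc N => DKG.pd k ψ₁ y * DKG.pd k ψ₂ y) x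
          (EuclideanSpace.single b (1:ℝ)) * (x a * cut n x) := by
        apply icongr
        intro x
        rw [fd_mul (((contDiff_pd hψ1C k).differentiable (by simp)) x)
          (((contDiff_pd hψ2C k).differentiable (by simp)) x)]
        ring
    _ = (-∫ x : Spc N, DKG.pd k ψ₁ x * DKG.pd k ψ₂ x *
            fderiv ℝ (fun y : Spc N => y a) x (EuclideanSpace.single b (1:ℝ)) * cut n x)
          - ∫ x : Spc N, DKG.pd k ψ₁ x * DKG.pd k ψ₂ x * (x a) *
              fderiv ℝ (cut n) x (EuclideanSpace.single b (1:ℝ)) := h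
    _ = -∫ x : Spc N, DKG.pd k ψ₁ x * DKG.pd k ψ₂ x *
            (x a * cutD n (EuclideanSpace.single b (1:ℝ)) x) := by
        have hzero : (∫ x : Spc N, DKG.pd k ψ₁ x * DKG.pd k ψ₂ x *
            fderiv ℝ (fun y : Spc N => y a) x (EuclideanSpace.single b (1:ℝ)) * cut n x)
            = 0 := by
          rw [show (fun x : Spc N => DKG.pd k ψ₁ x * DKG.pd k ψ₂ x *
              fderiv ℝ (fun y : Spc N => y a) x (EuclideanSpace.single b (1:ℝ)) * cut n x)
              = fun _ => (0:ℝ) from funext fun x => by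
            rw [fderiv_proj, EuclideanSpace.single_apply, if_neg hab]
            ring]
          simp
        rw [hzero, neg_zero, zero_sub, neg_inj]
        apply icongr
        intro x
        rw [cutD_self_eq]
        ring
end CancelAuxB
namespace CancelAuxB
open Real MeasureTheory Filter Topology
open scoped RealInnerProductSpace

variable {N : ℕ} {p : ℝ} {q ψ₁ ψ₂ : Spc N → ℝ} {ψl u : Spc N → ℝ}

lemma lap_expand (hψlC : ContDiff ℝ 2 ψl) (hker : ∀ y, DKG.applyL p q ψl y = 0)
    (hu : Continuous u) (n : ℕ) :
    ∫ x : Spc N, (ψl x - nl' p (q x) * ψl x) * (u x * cut n x)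
      = ∑ k : Fin N, ∫ x : Spc N,
          fderiv ℝ (DKG.pd k ψl) x (EuclideanSpace.single k (1:ℝ)) * (u x * cut n x) := by
  have hintk : ∀ k : Fin N, Integrable (fun x : Spc N =>
      fderiv ℝ (DKG.pd k ψl) x (EuclideanSpace.single k (1:ℝ)) * (u x * cut n x)) volume := by
    intro k
    apply integrable_of_cc
    · exact ((ContinuousLinearMap.apply ℝ ℝ _).continuous.comp
        ((contDiff_pd hψlC k).continuous_fderiv (by simp))).mul
        (hu.mul (contDiff_cut n (m := 0)).continuous)
    · exact ((hasCompactSupport_cut n).mul_left).mul_left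
  rw [← integral_finset_sum _ fun k _ => hintk k]
  apply icongr
  intro x
  rw [W_eq_lapsum hker x, Finset.sum_mul]

lemma sum_ite_coeff (f : Fin N → ℝ) (i : Fin N) :
    ∑ k : Fin N, (if i = k then (1:ℝ) else 0) * f k = f i := by
  have h : ∀ k, (if i = k then (1:ℝ) else 0) * f k = if i = k then f k else 0 := fun k => by
    split <;> simp
  rw [Finset.sum_congr rfl fun k _ => h k, Finset.sum_ite_eq]
  simp

lemma gen_rotation (hp : 2 < p) (hq : DKG.IsBoundState p q)
    (h1 : DKG.InKerL p q ψ₁) (h2 : DKG.InKerL p q ψ₂) {i j : Fin N} (hij : i ≠ j) :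
    Tendsto (fun n => ∫ x : Spc N,
      nl'' p (q x) * ψ₁ x * ψ₂ x * DKG.angD i j q x * cut n x) atTop (𝓝 0) := by
  obtain ⟨hψ1C, hψ1H, hker1⟩ := h1
  obtain ⟨hψ2C, hψ2H, hker2⟩ := h2
  have hji : j ≠ i := hij.symm
  have hψ1C1 : ContDiff ℝ 1 ψ₁ := hψ1C.of_le one_le_two
  have hψ2C1 : ContDiff ℝ 1 ψ₂ := hψ2C.of_le one_le_two
  have hh : ContDiff ℝ 1 (fun x : Spc N => nl' p (q x)) := hfun_contDiff hp hq
  have hW1C : ContDiff ℝ 1 (fun x : Spc N => ψ₁ x - nl' p (q x) * ψ₁ x) :=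
    hψ1C1.sub (hh.mul hψ1C1)
  have cpd1 : ∀ k, Continuous (DKG.pd k ψ₁) := continuous_pd hψ1C
  have cpd2 : ∀ k, Continuous (DKG.pd k ψ₂) := continuous_pd hψ2C
  have cW1 : Continuous (fun x : Spc N => ψ₁ x - nl' p (q x) * ψ₁ x) := hW1C.continuous
  have cW2 : Continuous (fun x : Spc N => ψ₂ x - nl' p (q x) * ψ₂ x) :=
    hψ2C1.continuous.sub (hh.continuous.mul hψ2C1.continuous)
  have cfW1 : ∀ w : Spc N, Continuous fun x => fderiv ℝ
      (fun y => ψ₁ y - nl' p (q y) * ψ₁ y) x w :=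
    fun w => (ContinuousLinearMap.apply ℝ ℝ w).continuous.comp
      (hW1C.continuous_fderiv (by simp))
  have hL2pd1 : ∀ k, MemLp (DKG.pd k ψ₁) 2 (volume : Measure (Spc N)) := memL2_pd hψ1C hψ1H
  have hL2pd2 : ∀ k, MemLp (DKG.pd k ψ₂) 2 (volume : Measure (Spc N)) := memL2_pd hψ2C hψ2H
  have hInt12 : ∀ k l : Fin N, Integrable (fun x => DKG.pd k ψ₁ x * DKG.pd l ψ₂ x) volume :=
    fun k l => integrable_mul_L2 (hL2pd1 k) (hL2pd2 l) (cpd1 k) (cpd2 l)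
  have hInt21 : ∀ k l : Fin N, Integrable (fun x => DKG.pd k ψ₂ x * DKG.pd l ψ₁ x) volume :=
    fun k l => integrable_mul_L2 (hL2pd2 k) (hL2pd1 l) (cpd2 k) (cpd1 l)
  -- the key identity
  have keyeq : ∀ n : ℕ,
      (∫ x : Spc N, nl'' p (q x) * ψ₁ x * ψ₂ x * DKG.angD i j q x * cut n x)
      = ∑ k : Fin N,
        ((∫ x : Spc N, DKG.pd k ψ₁ x * DKG.pd k ψ₂ x *
            (x i * cutD n (EuclideanSpace.single j (1:ℝ)) x))
          - (∫ x : Spc N, DKG.pd k ψ₂ x * DKG.pd j ψ₁ x *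
              (x i * cutD n (EuclideanSpace.single k (1:ℝ)) x))
          - (∫ x : Spc N, DKG.pd k ψ₁ x * DKG.pd j ψ₂ x *
              (x i * cutD n (EuclideanSpace.single k (1:ℝ)) x))
          - (∫ x : Spc N, DKG.pd k ψ₁ x * DKG.pd k ψ₂ x *
              (x j * cutD n (EuclideanSpace.single i (1:ℝ)) x))
          + (∫ x : Spc N, DKG.pd k ψ₂ x * DKG.pd i ψ₁ x *
              (x j * cutD n (EuclideanSpace.single k (1:ℝ)) x))
          + (∫ x : Spc N, DKG.pd k ψ₁ x * DKG.pd i ψ₂ x *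
              (x j * cutD n (EuclideanSpace.single k (1:ℝ)) x))) := by
    intro n
    have ccut : Continuous (cut (N := N) n) := (contDiff_cut n (m := 0)).continuous
    -- Step 1 : split via the master pointwise identity
    have hIAj : Integrable (fun x : Spc N => (ψ₂ x - nl' p (q x) * ψ₂ x) *
        (DKG.pd j ψ₁ x * x i * cut n x)) volume := by
      apply integrable_of_cc
      · exact cW2.mul (((cpd1 j).mul (contDiff_proj i (m := 0)).continuous).mul ccut)
      · exact ((hasCompactSupport_cut n).mul_left).mul_left
    have hIAi : Integrable (fun x : Spc N => (ψ₂ x - nl' p (q x) * ψ₂ x) *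
        (DKG.pd i ψ₁ x * x j * cut n x)) volume := by
      apply integrable_of_cc
      · exact cW2.mul (((cpd1 i).mul (contDiff_proj j (m := 0)).continuous).mul ccut)
      · exact ((hasCompactSupport_cut n).mul_left).mul_left
    have hIBj : Integrable (fun x : Spc N =>
        fderiv ℝ (fun y => ψ₁ y - nl' p (q y) * ψ₁ y) x (EuclideanSpace.single j (1:ℝ)) *
          (ψ₂ x * x i * cut n x)) volume := by
      apply integrable_of_cc
      · exact (cfW1 _).mul ((hψ2C1.continuous.mul
          (contDiff_proj i (m := 0)).continuous).mul ccut)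
      · exact ((hasCompactSupport_cut n).mul_left).mul_left
    have hIBi : Integrable (fun x : Spc N =>
        fderiv ℝ (fun y => ψ₁ y - nl' p (q y) * ψ₁ y) x (EuclideanSpace.single i (1:ℝ)) *
          (ψ₂ x * x j * cut n x)) volume := by
      apply integrable_of_cc
      · exact (cfW1 _).mul ((hψ2C1.continuous.mul
          (contDiff_proj j (m := 0)).continuous).mul ccut)
      · exact ((hasCompactSupport_cut n).mul_left).mul_left
    have step1 : (∫ x : Spc N, nl'' p (q x) * ψ₁ x * ψ₂ x * DKG.angD i j q x * cut n x)
        = ((∫ x : Spc N, (ψ₂ x - nl' p (q x) * ψ₂ x) * (DKG.pd j ψ₁ x * x i * cut n x))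
            - ∫ x : Spc N, fderiv ℝ (fun y => ψ₁ y - nl' p (q y) * ψ₁ y) x
                (EuclideanSpace.single j (1:ℝ)) * (ψ₂ x * x i * cut n x))
          - ((∫ x : Spc N, (ψ₂ x - nl' p (q x) * ψ₂ x) * (DKG.pd i ψ₁ x * x j * cut n x))
            - ∫ x : Spc N, fderiv ℝ (fun y => ψ₁ y - nl' p (q y) * ψ₁ y) x
                (EuclideanSpace.single i (1:ℝ)) * (ψ₂ x * x j * cut n x)) := by
      have I1 : Integrable (fun x : Spc N =>
          (ψ₂ x - nl' p (q x) * ψ₂ x) * (DKG.pd j ψ₁ x * x i * cut n x) -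
            fderiv ℝ (fun y => ψ₁ y - nl' p (q y) * ψ₁ y) x
              (EuclideanSpace.single j (1:ℝ)) * (ψ₂ x * x i * cut n x)) volume :=
        hIAj.sub hIBj
      have I2 : Integrable (fun x : Spc N =>
          (ψ₂ x - nl' p (q x) * ψ₂ x) * (DKG.pd i ψ₁ x * x j * cut n x) -
            fderiv ℝ (fun y => ψ₁ y - nl' p (q y) * ψ₁ y) x
              (EuclideanSpace.single i (1:ℝ)) * (ψ₂ x * x j * cut n x)) volume :=
        hIAi.sub hIBi
      rw [show (∫ x : Spc N, nl'' p (q x) * ψ₁ x * ψ₂ x * DKG.angD i j q x * cut n x)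
          = ∫ x : Spc N,
            (((ψ₂ x - nl' p (q x) * ψ₂ x) * (DKG.pd j ψ₁ x * x i * cut n x) -
              fderiv ℝ (fun y => ψ₁ y - nl' p (q y) * ψ₁ y) x
                (EuclideanSpace.single j (1:ℝ)) * (ψ₂ x * x i * cut n x)) -
            ((ψ₂ x - nl' p (q x) * ψ₂ x) * (DKG.pd i ψ₁ x * x j * cut n x) -
              fderiv ℝ (fun y => ψ₁ y - nl' p (q y) * ψ₁ y) x
                (EuclideanSpace.single i (1:ℝ)) * (ψ₂ x * x j * cut n x)))
          from ?_, integral_sub I1 I2, integral_sub hIAj hIBj, integral_sub hIAi hIBi]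
      apply icongr
      intro x
      have kj : nl'' p (q x) * ψ₁ x * ψ₂ x * DKG.pd j q x =
          DKG.pd j ψ₁ x * (ψ₂ x - nl' p (q x) * ψ₂ x) -
            fderiv ℝ (fun y => ψ₁ y - nl' p (q y) * ψ₁ y) x
              (EuclideanSpace.single j (1:ℝ)) * ψ₂ x :=
        keyPW hp hq hψ1C hψ2C x (EuclideanSpace.single j (1:ℝ))
      have ki : nl'' p (q x) * ψ₁ x * ψ₂ x * DKG.pd i q x =
          DKG.pd i ψ₁ x * (ψ₂ x - nl' p (q x) * ψ₂ x) -
            fderiv ℝ (fun y => ψ₁ y - nl' p (q y) * ψ₁ y) x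
              (EuclideanSpace.single i (1:ℝ)) * ψ₂ x :=
        keyPW hp hq hψ1C hψ2C x (EuclideanSpace.single i (1:ℝ))
      show nl'' p (q x) * ψ₁ x * ψ₂ x *
          (x i * DKG.pd j q x - x j * DKG.pd i q x) * cut n x = _
      linear_combination (x i * cut n x) * kj - (x j * cut n x) * ki
    -- Step 2 : IBP on the W₁ pieces
    have hBj := ibp_triple (EuclideanSpace.single j (1:ℝ)) hW1C
      (hψ2C1.mul (contDiff_proj i)) (contDiff_cut n) (hasCompactSupport_cut n)
    have hBi := ibp_triple (EuclideanSpace.single i (1:ℝ)) hW1C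
      (hψ2C1.mul (contDiff_proj j)) (contDiff_cut n) (hasCompactSupport_cut n)
    beta_reduce at hBj hBi
    have cBj1 : (∫ x : Spc N, (ψ₁ x - nl' p (q x) * ψ₁ x) *
          fderiv ℝ (fun y : Spc N => ψ₂ y * y i) x (EuclideanSpace.single j (1:ℝ)) * cut n x)
        = ∫ x : Spc N, (ψ₁ x - nl' p (q x) * ψ₁ x) *
            (DKG.pd j ψ₂ x * x i * cut n x) := by
      apply icongr
      intro x
      rw [fd_mul (hψ2C1.differentiable (by simp) x)
        (((contDiff_proj i (m := 1)).differentiable (by simp)) x),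
        fderiv_proj, EuclideanSpace.single_apply, if_neg hij]
      show (ψ₁ x - nl' p (q x) * ψ₁ x) * (DKG.pd j ψ₂ x * x i + ψ₂ x * 0) * cut n x = _
      ring
    have cBi1 : (∫ x : Spc N, (ψ₁ x - nl' p (q x) * ψ₁ x) *
          fderiv ℝ (fun y : Spc N => ψ₂ y * y j) x (EuclideanSpace.single i (1:ℝ)) * cut n x)
        = ∫ x : Spc N, (ψ₁ x - nl' p (q x) * ψ₁ x) *
            (DKG.pd i ψ₂ x * x j * cut n x) := by
      apply icongr
      intro x
      rw [fd_mul (hψ2C1.differentiable (by simp) x)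
        (((contDiff_proj j (m := 1)).differentiable (by simp)) x),
        fderiv_proj, EuclideanSpace.single_apply, if_neg hji]
      show (ψ₁ x - nl' p (q x) * ψ₁ x) * (DKG.pd i ψ₂ x * x j + ψ₂ x * 0) * cut n x = _
      ring
    have cBj2 : (∫ x : Spc N, (ψ₁ x - nl' p (q x) * ψ₁ x) * (ψ₂ x * x i) *
          fderiv ℝ (cut n) x (EuclideanSpace.single j (1:ℝ)))
        = ∫ x : Spc N, (ψ₁ x - nl' p (q x) * ψ₁ x) * (ψ₂ x * x i) *
            cutD n (EuclideanSpace.single j (1:ℝ)) x :=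
      icongr fun x => by rw [cutD_self_eq]
    have cBi2 : (∫ x : Spc N, (ψ₁ x - nl' p (q x) * ψ₁ x) * (ψ₂ x * x j) *
          fderiv ℝ (cut n) x (EuclideanSpace.single i (1:ℝ)))
        = ∫ x : Spc N, (ψ₁ x - nl' p (q x) * ψ₁ x) * (ψ₂ x * x j) *
            cutD n (EuclideanSpace.single i (1:ℝ)) x :=
      icongr fun x => by rw [cutD_self_eq]
    -- Step 3 : rotational kill of the non-integrable boundary term
    have hIRa : Integrable (fun x : Spc N => (ψ₁ x - nl' p (q x) * ψ₁ x) * (ψ₂ x * x i) *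
        cutD n (EuclideanSpace.single j (1:ℝ)) x) volume := by
      apply integrable_of_cc
      · exact (cW1.mul (hψ2C1.continuous.mul (contDiff_proj i (m := 0)).continuous)).mul
          (continuous_cutD n _)
      · exact (hasCompactSupport_cutD n _).mul_left
    have hIRb : Integrable (fun x : Spc N => (ψ₁ x - nl' p (q x) * ψ₁ x) * (ψ₂ x * x j) *
        cutD n (EuclideanSpace.single i (1:ℝ)) x) volume := by
      apply integrable_of_cc
      · exact (cW1.mul (hψ2C1.continuous.mul (contDiff_proj j (m := 0)).continuous)).mul
          (continuous_cutD n _)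
      · exact (hasCompactSupport_cutD n _).mul_left
    have hRK : (∫ x : Spc N, (ψ₁ x - nl' p (q x) * ψ₁ x) * (ψ₂ x * x i) *
          cutD n (EuclideanSpace.single j (1:ℝ)) x)
        - (∫ x : Spc N, (ψ₁ x - nl' p (q x) * ψ₁ x) * (ψ₂ x * x j) *
            cutD n (EuclideanSpace.single i (1:ℝ)) x) = 0 := by
      rw [← integral_sub hIRa hIRb]
      rw [show (fun x : Spc N => (ψ₁ x - nl' p (q x) * ψ₁ x) * (ψ₂ x * x i) *
          cutD n (EuclideanSpace.single j (1:ℝ)) x -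
            (ψ₁ x - nl' p (q x) * ψ₁ x) * (ψ₂ x * x j) *
              cutD n (EuclideanSpace.single i (1:ℝ)) x) = fun _ => (0:ℝ) from
        funext fun x => by
          simp only [cutD]
          rw [inner_single_coord, inner_single_coord]
          ring]
      simp
    -- Step 4 : Laplacian expansions
    have hAj := lap_expand (u := fun x : Spc N => DKG.pd j ψ₁ x * x i) hψ2C hker2
      ((cpd1 j).mul (contDiff_proj i (m := 0)).continuous) n
    have hAi := lap_expand (u := fun x : Spc N => DKG.pd i ψ₁ x * x j) hψ2C hker2
      ((cpd1 i).mul (contDiff_proj j (m := 0)).continuous) n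
    have hCj := lap_expand (u := fun x : Spc N => DKG.pd j ψ₂ x * x i) hψ1C hker1
      ((cpd2 j).mul (contDiff_proj i (m := 0)).continuous) n
    have hCi := lap_expand (u := fun x : Spc N => DKG.pd i ψ₂ x * x j) hψ1C hker1
      ((cpd2 i).mul (contDiff_proj j (m := 0)).continuous) n
    beta_reduce at hAj hAi hCj hCi
    -- Step 5 : per-k decompositions
    have hAjF : (∑ k : Fin N, ∫ x : Spc N,
          fderiv ℝ (DKG.pd k ψ₂) x (EuclideanSpace.single k (1:ℝ)) *
            (DKG.pd j ψ₁ x * x i * cut n x))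
        = (-∑ k : Fin N, ∫ x : Spc N, DKG.pd k ψ₂ x *
            (fderiv ℝ (DKG.pd k ψ₁) x (EuclideanSpace.single j (1:ℝ)) * x i) * cut n x)
          - (∑ k : Fin N, (if i = k then (1:ℝ) else 0) *
              ∫ x : Spc N, DKG.pd k ψ₂ x * DKG.pd j ψ₁ x * cut n x)
          - ∑ k : Fin N, ∫ x : Spc N, DKG.pd k ψ₂ x * (DKG.pd j ψ₁ x * x i) *
              cutD n (EuclideanSpace.single k (1:ℝ)) x := by
      rw [← Finset.sum_neg_distrib, ← Finset.sum_sub_distrib, ← Finset.sum_sub_distrib]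
      exact Finset.sum_congr rfl fun k _ => rot_per_k hψ2C hψ1C j i k n
    have hAiF : (∑ k : Fin N, ∫ x : Spc N,
          fderiv ℝ (DKG.pd k ψ₂) x (EuclideanSpace.single k (1:ℝ)) *
            (DKG.pd i ψ₁ x * x j * cut n x))
        = (-∑ k : Fin N, ∫ x : Spc N, DKG.pd k ψ₂ x *
            (fderiv ℝ (DKG.pd k ψ₁) x (EuclideanSpace.single i (1:ℝ)) * x j) * cut n x)
          - (∑ k : Fin N, (if j = k then (1:ℝ) else 0) *
              ∫ x : Spc N, DKG.pd k ψ₂ x * DKG.pd i ψ₁ x * cut n x)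
          - ∑ k : Fin N, ∫ x : Spc N, DKG.pd k ψ₂ x * (DKG.pd i ψ₁ x * x j) *
              cutD n (EuclideanSpace.single k (1:ℝ)) x := by
      rw [← Finset.sum_neg_distrib, ← Finset.sum_sub_distrib, ← Finset.sum_sub_distrib]
      exact Finset.sum_congr rfl fun k _ => rot_per_k hψ2C hψ1C i j k n
    have hCjF : (∑ k : Fin N, ∫ x : Spc N,
          fderiv ℝ (DKG.pd k ψ₁) x (EuclideanSpace.single k (1:ℝ)) *
            (DKG.pd j ψ₂ x * x i * cut n x))
        = (-∑ k : Fin N, ∫ x : Spc N, DKG.pd k ψ₁ x *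
            (fderiv ℝ (DKG.pd k ψ₂) x (EuclideanSpace.single j (1:ℝ)) * x i) * cut n x)
          - (∑ k : Fin N, (if i = k then (1:ℝ) else 0) *
              ∫ x : Spc N, DKG.pd k ψ₁ x * DKG.pd j ψ₂ x * cut n x)
          - ∑ k : Fin N, ∫ x : Spc N, DKG.pd k ψ₁ x * (DKG.pd j ψ₂ x * x i) *
              cutD n (EuclideanSpace.single k (1:ℝ)) x := by
      rw [← Finset.sum_neg_distrib, ← Finset.sum_sub_distrib, ← Finset.sum_sub_distrib]
      exact Finset.sum_congr rfl fun k _ => rot_per_k hψ1C hψ2C j i k n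
    have hCiF : (∑ k : Fin N, ∫ x : Spc N,
          fderiv ℝ (DKG.pd k ψ₁) x (EuclideanSpace.single k (1:ℝ)) *
            (DKG.pd i ψ₂ x * x j * cut n x))
        = (-∑ k : Fin N, ∫ x : Spc N, DKG.pd k ψ₁ x *
            (fderiv ℝ (DKG.pd k ψ₂) x (EuclideanSpace.single i (1:ℝ)) * x j) * cut n x)
          - (∑ k : Fin N, (if j = k then (1:ℝ) else 0) *
              ∫ x : Spc N, DKG.pd k ψ₁ x * DKG.pd i ψ₂ x * cut n x)
          - ∑ k : Fin N, ∫ x : Spc N, DKG.pd k ψ₁ x * (DKG.pd i ψ₂ x * x j) *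
              cutD n (EuclideanSpace.single k (1:ℝ)) x := by
      rw [← Finset.sum_neg_distrib, ← Finset.sum_sub_distrib, ← Finset.sum_sub_distrib]
      exact Finset.sum_congr rfl fun k _ => rot_per_k hψ1C hψ2C i j k n
    -- cross-term recombination
    have hCrossJ : (∑ k : Fin N, ∫ x : Spc N, DKG.pd k ψ₂ x *
          (fderiv ℝ (DKG.pd k ψ₁) x (EuclideanSpace.single j (1:ℝ)) * x i) * cut n x)
        + (∑ k : Fin N, ∫ x : Spc N, DKG.pd k ψ₁ x *
            (fderiv ℝ (DKG.pd k ψ₂) x (EuclideanSpace.single j (1:ℝ)) * x i) * cut n x)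
        = -∑ k : Fin N, ∫ x : Spc N, DKG.pd k ψ₁ x * DKG.pd k ψ₂ x *
            (x i * cutD n (EuclideanSpace.single j (1:ℝ)) x) := by
      rw [← Finset.sum_add_distrib, ← Finset.sum_neg_distrib]
      exact Finset.sum_congr rfl fun k _ => rot_cross hψ1C hψ2C hij k n
    have hCrossI : (∑ k : Fin N, ∫ x : Spc N, DKG.pd k ψ₂ x *
          (fderiv ℝ (DKG.pd k ψ₁) x (EuclideanSpace.single i (1:ℝ)) * x j) * cut n x)
        + (∑ k : Fin N, ∫ x : Spc N, DKG.pd k ψ₁ x *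
            (fderiv ℝ (DKG.pd k ψ₂) x (EuclideanSpace.single i (1:ℝ)) * x j) * cut n x)
        = -∑ k : Fin N, ∫ x : Spc N, DKG.pd k ψ₁ x * DKG.pd k ψ₂ x *
            (x j * cutD n (EuclideanSpace.single i (1:ℝ)) x) := by
      rw [← Finset.sum_add_distrib, ← Finset.sum_neg_distrib]
      exact Finset.sum_congr rfl fun k _ => rot_cross hψ1C hψ2C hji k n
    -- δ-sum collapses and cancellation
    have hD1 := sum_ite_coeff
      (fun k => ∫ x : Spc N, DKG.pd k ψ₂ x * DKG.pd j ψ₁ x * cut n x) i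
    have hD2 := sum_ite_coeff
      (fun k => ∫ x : Spc N, DKG.pd k ψ₁ x * DKG.pd j ψ₂ x * cut n x) i
    have hD3 := sum_ite_coeff
      (fun k => ∫ x : Spc N, DKG.pd k ψ₂ x * DKG.pd i ψ₁ x * cut n x) j
    have hD4 := sum_ite_coeff
      (fun k => ∫ x : Spc N, DKG.pd k ψ₁ x * DKG.pd i ψ₂ x * cut n x) j
    beta_reduce at hD1 hD2 hD3 hD4
    have hD14 : (∫ x : Spc N, DKG.pd i ψ₂ x * DKG.pd j ψ₁ x * cut n x)
        = ∫ x : Spc N, DKG.pd j ψ₁ x * DKG.pd i ψ₂ x * cut n x :=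
      icongr fun x => by ring
    have hD23 : (∫ x : Spc N, DKG.pd i ψ₁ x * DKG.pd j ψ₂ x * cut n x)
        = ∫ x : Spc N, DKG.pd j ψ₂ x * DKG.pd i ψ₁ x * cut n x :=
      icongr fun x => by ring
    -- boundary reshaping
    have hT1 : (∑ k : Fin N, ∫ x : Spc N, DKG.pd k ψ₂ x * (DKG.pd j ψ₁ x * x i) *
          cutD n (EuclideanSpace.single k (1:ℝ)) x)
        = ∑ k : Fin N, ∫ x : Spc N, DKG.pd k ψ₂ x * DKG.pd j ψ₁ x *
            (x i * cutD n (EuclideanSpace.single k (1:ℝ)) x) :=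
      Finset.sum_congr rfl fun k _ => icongr fun x => by ring
    have hT2 : (∑ k : Fin N, ∫ x : Spc N, DKG.pd k ψ₁ x * (DKG.pd j ψ₂ x * x i) *
          cutD n (EuclideanSpace.single k (1:ℝ)) x)
        = ∑ k : Fin N, ∫ x : Spc N, DKG.pd k ψ₁ x * DKG.pd j ψ₂ x *
            (x i * cutD n (EuclideanSpace.single k (1:ℝ)) x) :=
      Finset.sum_congr rfl fun k _ => icongr fun x => by ring
    have hT3 : (∑ k : Fin N, ∫ x : Spc N, DKG.pd k ψ₂ x * (DKG.pd i ψ₁ x * x j) *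
          cutD n (EuclideanSpace.single k (1:ℝ)) x)
        = ∑ k : Fin N, ∫ x : Spc N, DKG.pd k ψ₂ x * DKG.pd i ψ₁ x *
            (x j * cutD n (EuclideanSpace.single k (1:ℝ)) x) :=
      Finset.sum_congr rfl fun k _ => icongr fun x => by ring
    have hT4 : (∑ k : Fin N, ∫ x : Spc N, DKG.pd k ψ₁ x * (DKG.pd i ψ₂ x * x j) *
          cutD n (EuclideanSpace.single k (1:ℝ)) x)
        = ∑ k : Fin N, ∫ x : Spc N, DKG.pd k ψ₁ x * DKG.pd i ψ₂ x *
            (x j * cutD n (EuclideanSpace.single k (1:ℝ)) x) :=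
      Finset.sum_congr rfl fun k _ => icongr fun x => by ring
    -- body split
    have hBody : (∑ k : Fin N,
        ((∫ x : Spc N, DKG.pd k ψ₁ x * DKG.pd k ψ₂ x *
            (x i * cutD n (EuclideanSpace.single j (1:ℝ)) x))
          - (∫ x : Spc N, DKG.pd k ψ₂ x * DKG.pd j ψ₁ x *
              (x i * cutD n (EuclideanSpace.single k (1:ℝ)) x))
          - (∫ x : Spc N, DKG.pd k ψ₁ x * DKG.pd j ψ₂ x *
              (x i * cutD n (EuclideanSpace.single k (1:ℝ)) x))
          - (∫ x : Spc N, DKG.pd k ψ₁ x * DKG.pd k ψ₂ x *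
              (x j * cutD n (EuclideanSpace.single i (1:ℝ)) x))
          + (∫ x : Spc N, DKG.pd k ψ₂ x * DKG.pd i ψ₁ x *
              (x j * cutD n (EuclideanSpace.single k (1:ℝ)) x))
          + (∫ x : Spc N, DKG.pd k ψ₁ x * DKG.pd i ψ₂ x *
              (x j * cutD n (EuclideanSpace.single k (1:ℝ)) x))))
        = (∑ k : Fin N, ∫ x : Spc N, DKG.pd k ψ₁ x * DKG.pd k ψ₂ x *
            (x i * cutD n (EuclideanSpace.single j (1:ℝ)) x))
          - (∑ k : Fin N, ∫ x : Spc N, DKG.pd k ψ₂ x * DKG.pd j ψ₁ x *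
              (x i * cutD n (EuclideanSpace.single k (1:ℝ)) x))
          - (∑ k : Fin N, ∫ x : Spc N, DKG.pd k ψ₁ x * DKG.pd j ψ₂ x *
              (x i * cutD n (EuclideanSpace.single k (1:ℝ)) x))
          - (∑ k : Fin N, ∫ x : Spc N, DKG.pd k ψ₁ x * DKG.pd k ψ₂ x *
              (x j * cutD n (EuclideanSpace.single i (1:ℝ)) x))
          + (∑ k : Fin N, ∫ x : Spc N, DKG.pd k ψ₂ x * DKG.pd i ψ₁ x *
              (x j * cutD n (EuclideanSpace.single k (1:ℝ)) x))
          + (∑ k : Fin N, ∫ x : Spc N, DKG.pd k ψ₁ x * DKG.pd i ψ₂ x *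
              (x j * cutD n (EuclideanSpace.single k (1:ℝ)) x)) := by
      rw [Finset.sum_add_distrib, Finset.sum_add_distrib, Finset.sum_sub_distrib,
        Finset.sum_sub_distrib, Finset.sum_sub_distrib]
    rw [step1, hBj, hBi, cBj1, cBi1, cBj2, cBi2, hAj, hAi, hCj, hCi, hAjF, hAiF, hCjF, hCiF,
      hBody]
    linarith [hCrossJ, hCrossI, hD1, hD2, hD3, hD4, hD14, hD23, hT1, hT2, hT3, hT4, hRK]
  rw [funext keyeq]
  have hk : ∀ k : Fin N, Tendsto (fun n =>
      (∫ x : Spc N, DKG.pd k ψ₁ x * DKG.pd k ψ₂ x *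
          (x i * cutD n (EuclideanSpace.single j (1:ℝ)) x))
        - (∫ x : Spc N, DKG.pd k ψ₂ x * DKG.pd j ψ₁ x *
            (x i * cutD n (EuclideanSpace.single k (1:ℝ)) x))
        - (∫ x : Spc N, DKG.pd k ψ₁ x * DKG.pd j ψ₂ x *
            (x i * cutD n (EuclideanSpace.single k (1:ℝ)) x))
        - (∫ x : Spc N, DKG.pd k ψ₁ x * DKG.pd k ψ₂ x *
            (x j * cutD n (EuclideanSpace.single i (1:ℝ)) x))
        + (∫ x : Spc N, DKG.pd k ψ₂ x * DKG.pd i ψ₁ x *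
            (x j * cutD n (EuclideanSpace.single k (1:ℝ)) x))
        + (∫ x : Spc N, DKG.pd k ψ₁ x * DKG.pd i ψ₂ x *
            (x j * cutD n (EuclideanSpace.single k (1:ℝ)) x))) atTop (𝓝 0) := by
    intro k
    have t1 := tendsto_integral_proj_cutD (hInt12 k k) i (EuclideanSpace.single j (1:ℝ))
    have t2 := tendsto_integral_proj_cutD (hInt21 k j) i (EuclideanSpace.single k (1:ℝ))
    have t3 := tendsto_integral_proj_cutD (hInt12 k j) i (EuclideanSpace.single k (1:ℝ))
    have t4 := tendsto_integral_proj_cutD (hInt12 k k) j (EuclideanSpace.single i (1:ℝ))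
    have t5 := tendsto_integral_proj_cutD (hInt21 k i) j (EuclideanSpace.single k (1:ℝ))
    have t6 := tendsto_integral_proj_cutD (hInt12 k i) j (EuclideanSpace.single k (1:ℝ))
    have := ((((t1.sub t2).sub t3).sub t4).add t5).add t6
    simpa using this
  have := tendsto_finset_sum (Finset.univ : Finset (Fin N)) (fun k _ => hk k)
  simpa using this
end CancelAuxB

/-- Cancellation: for `ψ₁, ψ₂ ∈ ker L_q` and `ψ₃ ∈ Z_q`,
`∫ f''(q) ψ₁ ψ₂ ψ₃ = 0`. -/
theorem cancellation_kernel_directions {N : ℕ} (hN2 : 2 ≤ N) (hN5 : N ≤ 5)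
    {p : ℝ} (hp : Subcritical N p) (q : Spc N → ℝ) (hq : IsBoundState p q)
    (ψ₁ ψ₂ ψ₃ : Spc N → ℝ)
    (h1 : ψ₁ ∈ KerL p q) (h2 : ψ₂ ∈ KerL p q) (h3 : ψ₃ ∈ Zspan q) :
    ∫ x, nl'' p (q x) * ψ₁ x * ψ₂ x * ψ₃ x = 0 := by
  classical
  have hp2 : 2 < p := hp.1
  by_cases hInt : MeasureTheory.Integrable
    (fun x : Spc N => nl'' p (q x) * ψ₁ x * ψ₂ x * ψ₃ x) MeasureTheory.volume
  swap
  · exact MeasureTheory.integral_undef hInt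
  have h1' : InKerL p q ψ₁ := h1
  have h2' : InKerL p q ψ₂ := h2
  have hcnl : Continuous fun x : Spc N => nl'' p (q x) :=
    (DKG.CancelAux.continuous_nl'' hp2).comp hq.smooth.continuous
  have hcψ1 : Continuous ψ₁ := h1'.1.continuous
  have hcψ2 : Continuous ψ₂ := h2'.1.continuous
  let S : Submodule ℝ (Spc N → ℝ) :=
    { carrier := {g | (∀ n : ℕ, MeasureTheory.Integrable
          (fun x : Spc N => nl'' p (q x) * ψ₁ x * ψ₂ x * g x * CancelAuxB.cut n x)
            MeasureTheory.volume) ∧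
        Tendsto (fun n => ∫ x : Spc N,
          nl'' p (q x) * ψ₁ x * ψ₂ x * g x * CancelAuxB.cut n x) atTop (𝓝 0)}
      add_mem' := by
        rintro a b ⟨haI, haT⟩ ⟨hbI, hbT⟩
        have hfn : ∀ n : ℕ, (fun x : Spc N =>
            nl'' p (q x) * ψ₁ x * ψ₂ x * (a + b) x * CancelAuxB.cut n x)
            = fun x => nl'' p (q x) * ψ₁ x * ψ₂ x * a x * CancelAuxB.cut n x +
                nl'' p (q x) * ψ₁ x * ψ₂ x * b x * CancelAuxB.cut n x := by
          intro n
          funext x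
          simp only [Pi.add_apply]
          ring
        constructor
        · intro n
          rw [hfn n]
          exact (haI n).add (hbI n)
        · have hfn2 : (fun n => ∫ x : Spc N,
              nl'' p (q x) * ψ₁ x * ψ₂ x * (a + b) x * CancelAuxB.cut n x)
              = fun n => (∫ x : Spc N,
                  nl'' p (q x) * ψ₁ x * ψ₂ x * a x * CancelAuxB.cut n x) +
                ∫ x : Spc N, nl'' p (q x) * ψ₁ x * ψ₂ x * b x * CancelAuxB.cut n x := by
            funext n
            rw [hfn n]
            exact MeasureTheory.integral_add (haI n) (hbI n)
          rw [hfn2]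
          simpa using haT.add hbT
      zero_mem' := by
        have hfn : ∀ n : ℕ, (fun x : Spc N =>
            nl'' p (q x) * ψ₁ x * ψ₂ x * (0 : Spc N → ℝ) x * CancelAuxB.cut n x)
            = fun _ => (0:ℝ) := by
          intro n
          funext x
          simp
        constructor
        · intro n
          rw [hfn n]
          exact MeasureTheory.integrable_zero _ _ _
        · have hfn2 : (fun n => ∫ x : Spc N,
              nl'' p (q x) * ψ₁ x * ψ₂ x * (0 : Spc N → ℝ) x * CancelAuxB.cut n x)
              = fun _ => (0:ℝ) := by
            funext n
            rw [hfn n]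
            simp
          rw [hfn2]
          exact tendsto_const_nhds
      smul_mem' := by
        rintro c a ⟨haI, haT⟩
        have hfn : ∀ n : ℕ, (fun x : Spc N =>
            nl'' p (q x) * ψ₁ x * ψ₂ x * (c • a) x * CancelAuxB.cut n x)
            = fun x => c * (nl'' p (q x) * ψ₁ x * ψ₂ x * a x * CancelAuxB.cut n x) := by
          intro n
          funext x
          simp only [Pi.smul_apply, smul_eq_mul]
          ring
        constructor
        · intro n
          rw [hfn n]
          exact (haI n).const_mul c
        · have hfn2 : (fun n => ∫ x : Spc N,
              nl'' p (q x) * ψ₁ x * ψ₂ x * (c • a) x * CancelAuxB.cut n x)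
              = fun n => c * ∫ x : Spc N,
                  nl'' p (q x) * ψ₁ x * ψ₂ x * a x * CancelAuxB.cut n x := by
            funext n
            rw [hfn n]
            exact MeasureTheory.integral_const_mul c _
          rw [hfn2]
          simpa using haT.const_mul c }
  have hsub : (Set.range fun n : Fin N => pd n q) ∪
      {g | ∃ i j : Fin N, i < j ∧ g = angD i j q} ⊆ (S : Set (Spc N → ℝ)) := by
    rintro g (hg | hg)
    · obtain ⟨m, rfl⟩ := hg
      constructor
      · intro n
        apply CancelAuxB.integrable_of_cc
        · exact (((hcnl.mul hcψ1).mul hcψ2).mul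
            (CancelAuxB.continuous_pd hq.smooth m)).mul
            (CancelAuxB.contDiff_cut n (m := 0)).continuous
        · exact (CancelAuxB.hasCompactSupport_cut n).mul_left
      · exact CancelAuxB.gen_translation hp2 hq h1' h2' m
    · obtain ⟨i, j, hij, rfl⟩ := hg
      have hcang : Continuous (angD i j q) := by
        have : angD i j q = fun x => x i * pd j q x - x j * pd i q x := rfl
        rw [this]
        exact ((CancelAuxB.contDiff_proj i (m := 0)).continuous.mul
          (CancelAuxB.continuous_pd hq.smooth j)).sub
          ((CancelAuxB.contDiff_proj j (m := 0)).continuous.mul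
            (CancelAuxB.continuous_pd hq.smooth i))
      constructor
      · intro n
        apply CancelAuxB.integrable_of_cc
        · exact (((hcnl.mul hcψ1).mul hcψ2).mul hcang).mul
            (CancelAuxB.contDiff_cut n (m := 0)).continuous
        · exact (CancelAuxB.hasCompactSupport_cut n).mul_left
      · exact CancelAuxB.gen_rotation hp2 hq h1' h2' (ne_of_lt hij)
  have hle : Zspan q ≤ S := Submodule.span_le.mpr hsub
  have hP := hle h3
  obtain ⟨hPI, hPT⟩ := hP
  have hlim := CancelAuxB.tendsto_integral_cut hInt
  exact tendsto_nhds_unique hlim hPT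

end DKG
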